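/- arXiv:1508.07299 — 4 statements merged into one kernel-verified Lean document; each statement's English description precedes it below -/
import Mathlib

section
/- Let G be a finite connected simple Class 0 graph on at least 3 vertices and let v ∈ V(G). Form G' from G by adding a new vertex v' (not adjacent to v) whose neighborhood is exactly N(v), the neighborhood of v in G. Then G' is also Class 0. -/
/-- A single pebbling move on a graph `G`: remove two pebbles from a vertex `u`
(which must carry at least two pebbles) and add one pebble on a neighbor `v` of `u`. -/
def PebblingMove {V : Type*} (G : SimpleGraph V) (p q : V → ℕ) : Prop :=
  ∃ u v : V, G.Adj u v ∧ 2 ≤ p u ∧ q u = p u - 2 ∧ q v = p v + 1 ∧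
    ∀ x : V, x ≠ u → x ≠ v → q x = p x

/-- A configuration `p` is solvable for the root `r` if some sequence of pebbling moves
starting from `p` produces a configuration with at least one pebble on `r`. -/
def PebblingSolvable {V : Type*} (G : SimpleGraph V) (r : V) (p : V → ℕ) : Prop :=
  ∃ q : V → ℕ, Relation.ReflTransGen (PebblingMove G) p q ∧ 1 ≤ q r

/-- The rooted pebbling number `π(G, r)`: the least `k` such that every configuration
of size `k` is solvable for the root `r`. -/
noncomputable def rootedPebblingNumber {V : Type*} [Fintype V] (G : SimpleGraph V) (r : V) : ℕ :=
  sInf {k : ℕ | ∀ p : V → ℕ, (∑ v, p v) = k → PebblingSolvable G r p}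

/-- The pebbling number `π(G)`: the least `k` such that for every root `r`, every
configuration of size `k` is solvable for `r`. -/
noncomputable def pebblingNumber {V : Type*} [Fintype V] (G : SimpleGraph V) : ℕ :=
  sInf {k : ℕ | ∀ (r : V) (p : V → ℕ), (∑ v, p v) = k → PebblingSolvable G r p}

/-- A graph is Class 0 if its pebbling number equals its number of vertices. -/
def Class0 {V : Type*} [Fintype V] (G : SimpleGraph V) : Prop :=
  pebblingNumber G = Fintype.card V

/-- The graph obtained from `G` by adding a new vertex (named `none`) whose
neighborhood is exactly the neighborhood of `v` in `G` (in particular the new vertex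
is not adjacent to `v`). -/
def cloneVertex {V : Type*} (G : SimpleGraph V) (v : V) : SimpleGraph (Option V) :=
  SimpleGraph.fromRel fun a b =>
    match a, b with
    | some a, some b => G.Adj a b
    | none, some b => G.Adj v b
    | some a, none => G.Adj v a
    | none, none => False

namespace Clone0

variable {V : Type*}

theorem move_add {G : SimpleGraph V} {p q : V → ℕ} (δ : V → ℕ)
    (h : PebblingMove G p q) :
    PebblingMove G (fun x => p x + δ x) (fun x => q x + δ x) := by
  obtain ⟨u, w, hadj, h2, hu, hw, ho⟩ := h
  refine ⟨u, w, hadj, by simp only []; omega, by simp only []; omega,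
    by simp only []; omega, ?_⟩
  intro x hxu hxw
  simp only [ho x hxu hxw]

theorem rtg_add {G : SimpleGraph V} {p q : V → ℕ} (δ : V → ℕ)
    (h : Relation.ReflTransGen (PebblingMove G) p q) :
    Relation.ReflTransGen (PebblingMove G) (fun x => p x + δ x) (fun x => q x + δ x) :=
  Relation.ReflTransGen.lift (fun (f : V → ℕ) (x : V) => f x + δ x) (fun _ _ hab => move_add δ hab) _ _ h

def mvc {α : Type*} [DecidableEq α] (p : α → ℕ) (u w : α) : α → ℕ :=
  fun x => if x = u then p u - 2 else if x = w then p w + 1 else p x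

theorem mvc_u {α : Type*} [DecidableEq α] (p : α → ℕ) (u w : α) :
    mvc p u w u = p u - 2 := by simp [mvc]

theorem mvc_w {α : Type*} [DecidableEq α] (p : α → ℕ) {u w : α} (h : w ≠ u) :
    mvc p u w w = p w + 1 := by simp [mvc, h]

theorem mvc_other {α : Type*} [DecidableEq α] (p : α → ℕ) {u w x : α}
    (h1 : x ≠ u) (h2 : x ≠ w) : mvc p u w x = p x := by simp [mvc, h1, h2]

theorem mkMove [DecidableEq V] {G : SimpleGraph V} {u w : V} (hadj : G.Adj u w)
    {p : V → ℕ} (h2 : 2 ≤ p u) : PebblingMove G p (mvc p u w) :=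
  ⟨u, w, hadj, h2, mvc_u p u w, mvc_w p hadj.ne', fun _ hx1 hx2 => mvc_other p hx1 hx2⟩

theorem solvable_tail {G : SimpleGraph V} {r : V} {p q : V → ℕ}
    (h : PebblingMove G p q) (hs : PebblingSolvable G r q) : PebblingSolvable G r p :=
  let ⟨z, hz, hr⟩ := hs; ⟨z, Relation.ReflTransGen.head h hz, hr⟩

theorem solvable_rtg {G : SimpleGraph V} {r : V} {p q : V → ℕ}
    (h : Relation.ReflTransGen (PebblingMove G) p q) (hs : PebblingSolvable G r q) :
    PebblingSolvable G r p :=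
  let ⟨z, hz, hr⟩ := hs; ⟨z, h.trans hz, hr⟩

theorem no_moves {G : SimpleGraph V} {p q : V → ℕ} (hp : ∀ x, p x ≤ 1)
    (h : Relation.ReflTransGen (PebblingMove G) p q) : q = p := by
  induction h with
  | refl => rfl
  | tail h1 h2 ih =>
    obtain ⟨u, w, _, h2le, _⟩ := h2
    rw [ih] at h2le
    exact absurd h2le (by have := hp u; omega)

theorem solvset_succ {V : Type*} [Fintype V] [DecidableEq V] {G : SimpleGraph V} {k : ℕ}
    (hk : ∀ (r : V) (p : V → ℕ), (∑ x, p x) = k → PebblingSolvable G r p)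
    (r : V) (p : V → ℕ) (hp : (∑ x, p x) = k + 1) : PebblingSolvable G r p := by
  have hex : ∃ x : V, 1 ≤ p x := by
    by_contra hc
    push_neg at hc
    have : (∑ x, p x) = 0 := Finset.sum_eq_zero (fun x _ => by have := hc x; omega)
    omega
  obtain ⟨x, hx⟩ := hex
  set p1 : V → ℕ := Function.update p x (p x - 1) with hp1
  have hsum : (∑ y, p1 y) = k := by
    have h1 : p x + ∑ y ∈ Finset.univ.erase x, p y = ∑ y, p y :=
      Finset.add_sum_erase _ p (Finset.mem_univ x)
    have h2 : p1 x + ∑ y ∈ Finset.univ.erase x, p1 y = ∑ y, p1 y :=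
      Finset.add_sum_erase _ p1 (Finset.mem_univ x)
    have h3 : ∑ y ∈ Finset.univ.erase x, p1 y = ∑ y ∈ Finset.univ.erase x, p y :=
      Finset.sum_congr rfl (fun y hy => by
        simp [hp1, Function.update_of_ne (Finset.ne_of_mem_erase hy)])
    have h4 : p1 x = p x - 1 := by simp [hp1]
    omega
  obtain ⟨q, hq, hqr⟩ := hk r p1 hsum
  have hpE : p = fun y => p1 y + (if y = x then 1 else 0) := by
    funext y
    by_cases hyx : y = x
    · subst hyx; simp [hp1]; omega
    · simp [hp1, Function.update_of_ne hyx, hyx]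
  rw [hpE]
  exact ⟨_, rtg_add _ hq, le_trans hqr (Nat.le_add_right _ _)⟩

theorem solvset_ge {V : Type*} [Fintype V] [DecidableEq V] {G : SimpleGraph V} {k m : ℕ}
    (hk : ∀ (r : V) (p : V → ℕ), (∑ x, p x) = k → PebblingSolvable G r p) (hm : k ≤ m) :
    ∀ (r : V) (p : V → ℕ), (∑ x, p x) = m → PebblingSolvable G r p := by
  obtain ⟨j, rfl⟩ := Nat.exists_eq_add_of_le hm
  clear hm
  induction j with
  | zero => simpa using hk
  | succ n ih =>
    intro r p hp
    exact solvset_succ ih r p (by omega)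

theorem first_entry {G : SimpleGraph V} {v : V} {p q : V → ℕ}
    (h : Relation.ReflTransGen (PebblingMove G) p q) (hv : p v = 0) (hq : 1 ≤ q v) :
    ∃ z w, Relation.ReflTransGen (PebblingMove G) p z ∧ G.Adj v w ∧ 2 ≤ z w := by
  revert hv
  induction h using Relation.ReflTransGen.head_induction_on with
  | refl => intro hv; omega
  | head hm hrest ih =>
    intro hv
    obtain ⟨u, w, hadj, h2, hu, hw, ho⟩ := hm
    by_cases hwv : w = v
    · subst hwv
      exact ⟨_, u, Relation.ReflTransGen.refl, hadj.symm, h2⟩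
    · have huv : u ≠ v := fun h => by rw [h] at h2; omega
      obtain ⟨z, w', hz, hadj', h2'⟩ := ih (by rw [ho v (Ne.symm huv) (Ne.symm hwv)]; exact hv)
      exact ⟨z, w', Relation.ReflTransGen.head ⟨u, w, hadj, h2, hu, hw, ho⟩ hz, hadj', h2'⟩

theorem exists_nbr [Fintype V] {G : SimpleGraph V} (hG : G.Connected)
    (h2 : 2 ≤ Fintype.card V) (v : V) : ∃ w, G.Adj v w := by
  obtain ⟨x, hx⟩ := Fintype.exists_ne_of_one_lt_card (by omega) v
  obtain ⟨W⟩ := hG.preconnected v x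
  cases W with
  | nil => exact absurd rfl hx
  | cons h _ => exact ⟨_, h⟩

theorem clone_adj_some {G : SimpleGraph V} {v a b : V} :
    (cloneVertex G v).Adj (some a) (some b) ↔ G.Adj a b := by
  unfold cloneVertex
  rw [SimpleGraph.fromRel_adj]
  constructor
  · rintro ⟨hne, h | h⟩
    · exact h
    · exact h.symm
  · intro h
    exact ⟨by simpa using h.ne, Or.inl h⟩

theorem clone_adj_none_some {G : SimpleGraph V} {v b : V} :
    (cloneVertex G v).Adj none (some b) ↔ G.Adj v b := by
  unfold cloneVertex
  rw [SimpleGraph.fromRel_adj]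
  constructor
  · rintro ⟨hne, h | h⟩
    · exact h
    · exact h
  · intro h
    exact ⟨by simp, Or.inl h⟩

theorem clone_adj_some_none {G : SimpleGraph V} {v a : V} :
    (cloneVertex G v).Adj (some a) none ↔ G.Adj v a := by
  rw [SimpleGraph.adj_comm]
  exact clone_adj_none_some

def liftConf (c : ℕ) (P : V → ℕ) : Option V → ℕ := fun o => o.elim c P

@[simp] theorem liftConf_none {c : ℕ} {P : V → ℕ} : liftConf c P none = c := rfl
@[simp] theorem liftConf_some {c : ℕ} {P : V → ℕ} {x : V} : liftConf c P (some x) = P x := rfl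

theorem move_lift {G : SimpleGraph V} {v : V} {c : ℕ} {P Q : V → ℕ}
    (h : PebblingMove G P Q) :
    PebblingMove (cloneVertex G v) (liftConf c P) (liftConf c Q) := by
  obtain ⟨u, w, hadj, h2, hu, hw, ho⟩ := h
  refine ⟨some u, some w, clone_adj_some.2 hadj, h2, hu, hw, ?_⟩
  rintro (_ | x) hxu hxw
  · rfl
  · exact ho x (by simpa using hxu) (by simpa using hxw)

theorem rtg_lift {G : SimpleGraph V} {v : V} (c : ℕ) {P Q : V → ℕ}
    (h : Relation.ReflTransGen (PebblingMove G) P Q) :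
    Relation.ReflTransGen (PebblingMove (cloneVertex G v)) (liftConf c P) (liftConf c Q) :=
  Relation.ReflTransGen.lift (liftConf c) (fun _ _ hab => move_lift hab) _ _ h

theorem two_neighbors [Fintype V] [DecidableEq V] {G : SimpleGraph V}
    (hG : G.Connected) (hcard : 3 ≤ Fintype.card V)
    (hsolv : ∀ (r : V) (p : V → ℕ), (∑ x, p x) = Fintype.card V → PebblingSolvable G r p)
    (v : V) : ∃ w1 w2, G.Adj v w1 ∧ G.Adj v w2 ∧ w1 ≠ w2 := by
  obtain ⟨u, hu⟩ := exists_nbr hG (by omega) v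
  by_contra hc
  push_neg at hc
  have honly : ∀ w, G.Adj v w → w = u := fun w hw => hc w u hw hu
  have hex : ∃ r0, r0 ≠ v ∧ r0 ≠ u := by
    by_contra hr
    push_neg at hr
    have hsub : (Finset.univ : Finset V) ⊆ {v, u} := by
      intro y _
      rcases eq_or_ne y v with h | h
      · simp [h]
      · simp [hr y h]
    have h1 := Finset.card_le_card hsub
    have h2 : ({v, u} : Finset V).card ≤ 2 :=
      le_trans (Finset.card_insert_le _ _) (by simp)
    rw [Finset.card_univ] at h1
    omega
  obtain ⟨r0, hr0v, hr0u⟩ := hex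
  have huv : u ≠ v := hu.ne'
  set p0 : V → ℕ := fun y => if y = v then 3 else if y = u then 0 else if y = r0 then 0 else 1
    with hp0
  have hsum : (∑ y, p0 y) = Fintype.card V := by
    have e1 : p0 v + ∑ y ∈ Finset.univ.erase v, p0 y = ∑ y, p0 y :=
      Finset.add_sum_erase _ _ (Finset.mem_univ v)
    have e2 : p0 u + ∑ y ∈ (Finset.univ.erase v).erase u, p0 y
        = ∑ y ∈ Finset.univ.erase v, p0 y :=
      Finset.add_sum_erase _ _ (by simp [huv])
    have e3 : p0 r0 + ∑ y ∈ ((Finset.univ.erase v).erase u).erase r0, p0 y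
        = ∑ y ∈ (Finset.univ.erase v).erase u, p0 y :=
      Finset.add_sum_erase _ _ (by simp [hr0u, hr0v])
    have e4 : ∑ y ∈ ((Finset.univ.erase v).erase u).erase r0, p0 y
        = ∑ _y ∈ ((Finset.univ.erase v).erase u).erase r0, 1 := by
      refine Finset.sum_congr rfl (fun y hy => ?_)
      simp only [Finset.mem_erase] at hy
      simp [hp0, hy.1, hy.2.1, hy.2.2.1]
    have e5 : (((Finset.univ.erase v).erase u).erase r0).card = Fintype.card V - 3 := by
      rw [Finset.card_erase_of_mem (by simp [hr0u, hr0v]),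
        Finset.card_erase_of_mem (by simp [huv]),
        Finset.card_erase_of_mem (Finset.mem_univ v), Finset.card_univ]
      omega
    have hv3 : p0 v = 3 := by simp [hp0]
    have hu0 : p0 u = 0 := by simp [hp0, huv]
    have hr00 : p0 r0 = 0 := by simp [hp0, hr0v, hr0u]
    rw [e4, Finset.sum_const, smul_eq_mul, mul_one, e5] at e3
    omega
  obtain ⟨qf, hqf, hqfr⟩ := hsolv r0 p0 hsum
  have inv : ∀ Z, Relation.ReflTransGen (PebblingMove G) p0 Z →
      Z r0 = 0 ∧ (∀ x, x ≠ v → Z x ≤ 1) ∧ Z v + 2 * Z u ≤ 3 := by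
    intro Z hZ
    induction hZ with
    | refl =>
      refine ⟨by simp [hp0, hr0v, hr0u], fun x hx => ?_, by simp [hp0, huv]⟩
      simp only [hp0, hx, if_false]
      split_ifs <;> omega
    | @tail b c h1 h2 ih =>
      obtain ⟨ihr, ihb, ihvu⟩ := ih
      obtain ⟨u0, y, hadj, h2le, hu0, hy0, ho⟩ := h2
      have hu0v : u0 = v := by
        by_contra h
        have := ihb u0 h
        omega
      have hyu : y = u := honly y (by rwa [hu0v] at hadj)
      have ebu : b u0 = b v := by rw [hu0v]
      have eby : b y = b u := by rw [hyu]
      have hcv : c v = b v - 2 := by rw [← hu0v]; exact hu0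
      have hcu : c u = b u + 1 := by rw [← hyu]; exact hy0
      refine ⟨?_, fun x hx => ?_, ?_⟩
      · rw [ho r0 (fun hh => hr0v (hh.trans hu0v)) (fun hh => hr0u (hh.trans hyu))]
        exact ihr
      · rcases eq_or_ne x u with h | h
        · subst h; omega
        · rw [ho x (fun hh => hx (hh.trans hu0v)) (fun hh => h (hh.trans hyu))]
          exact ihb x hx
      · omega
  have := (inv qf hqf).1
  omega

theorem deliver [Fintype V] [DecidableEq V] {G : SimpleGraph V}
    (hG : G.Connected) (hcard : 3 ≤ Fintype.card V)
    (hsolv : ∀ (r : V) (p : V → ℕ), (∑ x, p x) = Fintype.card V → PebblingSolvable G r p)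
    (v : V) (q : V → ℕ) (hv : q v = 0) (hN : ∀ x, G.Adj v x → q x = 0)
    (hsize : Fintype.card V - 2 ≤ ∑ x, q x) :
    ∃ qt x, Relation.ReflTransGen (PebblingMove G) q qt ∧ G.Adj v x ∧ 1 ≤ qt x := by
  classical
  by_contra hc
  push_neg at hc
  have trapped : ∀ qt, Relation.ReflTransGen (PebblingMove G) q qt →
      ∀ x, G.Adj v x → qt x = 0 := by
    intro qt hqt x hx
    have := hc qt x hqt hx
    omega
  obtain ⟨w1, w2, hw1, hw2, hne⟩ := two_neighbors hG hcard hsolv v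
  set ind : V → ℕ := fun x => if G.Adj v x then 1 else 0 with hind
  set F : V → ℕ := fun x => q x + ind x with hF
  have hFsum : Fintype.card V ≤ ∑ x, F x := by
    have h1 : ∑ x, F x = (∑ x, q x) + ∑ x, ind x := by
      rw [hF]; exact Finset.sum_add_distrib
    have h2 : 2 ≤ ∑ x, ind x := by
      calc 2 = ∑ x ∈ ({w1, w2} : Finset V), ind x := by
              rw [Finset.sum_insert (by simp [hne]), Finset.sum_singleton]
              simp [hind, hw1, hw2]
        _ ≤ ∑ x, ind x := Finset.sum_le_sum_of_subset (Finset.subset_univ _)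
    omega
  obtain ⟨Zf, hZf, hZfv⟩ := solvset_ge hsolv hFsum v F rfl
  have hFv : F v = 0 := by simp [hF, hind, hv]
  obtain ⟨Z, w, hZ, hadjw, h2w⟩ := first_entry hZf hFv hZfv
  have vzero : ∀ qt, Relation.ReflTransGen (PebblingMove G) q qt → qt v = 0 := by
    intro qt hqt
    by_contra hnz
    obtain ⟨z, w', hz, hadj', h2'⟩ := first_entry hqt hv (by omega)
    have := trapped z hz w' hadj'
    omega
  have inv : ∀ Z', Relation.ReflTransGen (PebblingMove G) F Z' →
      ∃ qt, Relation.ReflTransGen (PebblingMove G) q qt ∧ ∀ x, Z' x = qt x + ind x := by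
    intro Z' hZ'
    induction hZ' with
    | refl => exact ⟨q, Relation.ReflTransGen.refl, fun x => rfl⟩
    | @tail b c h1 h2 ih =>
      obtain ⟨qt, hqt, hqteq⟩ := ih
      obtain ⟨u0, y, hadj, h2le, hu0, hy0, ho⟩ := h2
      have hu0nv : ¬ G.Adj v u0 := by
        intro h
        have ht := trapped qt hqt u0 h
        have he := hqteq u0
        rw [ht] at he
        simp [hind, h] at he
        omega
      have hindu0 : ind u0 = 0 := by simp [hind, hu0nv]
      have hu0v : u0 ≠ v := by
        intro h
        subst h
        have h1' := vzero qt hqt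
        have h2' := hqteq u0
        simp [hind] at h2'
        omega
      have hqtu0 : 2 ≤ qt u0 := by
        have := hqteq u0
        omega
      have hyadj : ¬ G.Adj v y := by
        intro h
        have hmv : Relation.ReflTransGen (PebblingMove G) q (mvc qt u0 y) :=
          hqt.tail (mkMove hadj hqtu0)
        have := trapped _ hmv y h
        rw [mvc_w qt hadj.ne'] at this
        omega
      have hindy : ind y = 0 := by simp [hind, hyadj]
      refine ⟨mvc qt u0 y, hqt.tail (mkMove hadj hqtu0), fun x => ?_⟩
      by_cases hx1 : x = u0
      · subst hx1
        rw [hu0, mvc_u, hqteq x]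
        omega
      · by_cases hx2 : x = y
        · subst hx2
          rw [hy0, mvc_w qt hadj.ne', hqteq x]
          omega
        · rw [ho x hx1 hx2, mvc_other qt hx1 hx2, hqteq x]
  obtain ⟨qt, hqt, heq⟩ := inv Z hZ
  have ht := trapped qt hqt w hadjw
  have he := heq w
  rw [ht] at he
  simp [hind, hadjw] at he
  omega

def SimRel (v : V) (q : V → ℕ) (q' : Option V → ℕ) : Prop :=
  (∀ x, x ≠ v → q' (some x) = q x) ∧ q v = q' (some v) + 2 * (q' none / 2)

theorem sim_step [DecidableEq V] {G : SimpleGraph V} {v : V} {q qq : V → ℕ}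
    {q' : Option V → ℕ} (hrel : SimRel v q q') (hm : PebblingMove G q qq) :
    ∃ q'', PebblingMove (cloneVertex G v) q' q'' ∧ SimRel v qq q'' := by
  obtain ⟨heq, hv⟩ := hrel
  obtain ⟨u0, y, hadj, h2, hu0, hy0, ho⟩ := hm
  by_cases hu0v : u0 = v
  · subst hu0v
    have hyv : y ≠ u0 := hadj.ne'
    by_cases hsv : 2 ≤ q' (some u0)
    · refine ⟨mvc q' (some u0) (some y), mkMove (clone_adj_some.2 hadj) hsv, fun x hx => ?_, ?_⟩
      · by_cases hxy : x = y
        · subst hxy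
          rw [hy0, mvc_w q' (by simpa using hyv), heq x hx]
        · rw [ho x hx hxy, mvc_other q' (by simpa using hx) (by simpa using hxy), heq x hx]
      · rw [hu0, mvc_u, mvc_other q' (by simp) (by simp)]
        omega
    · have h2n : 2 ≤ q' none := by omega
      refine ⟨mvc q' none (some y), mkMove (clone_adj_none_some.2 hadj) h2n, fun x hx => ?_, ?_⟩
      · by_cases hxy : x = y
        · subst hxy
          rw [hy0, mvc_w q' (by simp), heq x hx]
        · rw [ho x hx hxy, mvc_other q' (by simp) (by simpa using hxy), heq x hx]
      · rw [hu0, mvc_u, mvc_other q' (by simp) (by simpa using hadj.ne)]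
        omega
  · have hsu : 2 ≤ q' (some u0) := by rw [heq u0 hu0v]; exact h2
    have hyu : y ≠ u0 := hadj.ne'
    refine ⟨mvc q' (some u0) (some y), mkMove (clone_adj_some.2 hadj) hsu, fun x hx => ?_, ?_⟩
    · by_cases hx1 : x = u0
      · subst hx1
        rw [hu0, mvc_u, heq x hx]
      · by_cases hxy : x = y
        · subst hxy
          rw [hy0, mvc_w q' (by simpa using hyu), heq x hx]
        · rw [ho x hx1 hxy, mvc_other q' (by simpa using hx1) (by simpa using hxy), heq x hx]
    · by_cases hyv : y = v
      · subst hyv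
        rw [hy0, mvc_w q' (by simpa using hyu), mvc_other q' (by simp) (by simp [Ne.symm hyu])]
        omega
      · rw [ho v (Ne.symm hu0v) (Ne.symm hyv),
          mvc_other q' (by simpa using Ne.symm hu0v) (by simpa using Ne.symm hyv),
          mvc_other q' (by simp) (by simp)]
        exact hv

theorem sim_rtg [DecidableEq V] {G : SimpleGraph V} {v : V} {q qq : V → ℕ}
    {q' : Option V → ℕ} (h : Relation.ReflTransGen (PebblingMove G) q qq)
    (hrel : SimRel v q q') :
    ∃ q'', Relation.ReflTransGen (PebblingMove (cloneVertex G v)) q' q'' ∧ SimRel v qq q'' := by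
  induction h with
  | refl => exact ⟨q', Relation.ReflTransGen.refl, hrel⟩
  | tail h1 h2 ih =>
    obtain ⟨q1, hq1, hrel1⟩ := ih
    obtain ⟨q2, hm2, hrel2⟩ := sim_step hrel1 h2
    exact ⟨q2, hq1.tail hm2, hrel2⟩

theorem sum_update_zero [Fintype V] [DecidableEq V] (P : V → ℕ) (v : V) :
    (∑ x, Function.update P v 0 x) + P v = ∑ x, P x := by
  rw [Finset.sum_update_of_mem (Finset.mem_univ v) P 0, zero_add, add_comm,
    Finset.sdiff_singleton_eq_erase]
  exact Finset.add_sum_erase _ _ (Finset.mem_univ v)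

theorem main_mem [Fintype V] [DecidableEq V] {G : SimpleGraph V} (hG : G.Connected)
    (hcard : 3 ≤ Fintype.card V)
    (hsolv : ∀ (r : V) (p : V → ℕ), (∑ x, p x) = Fintype.card V → PebblingSolvable G r p)
    (v : V) (r' : Option V) (p' : Option V → ℕ)
    (hsum : (∑ o, p' o) = Fintype.card V + 1) :
    PebblingSolvable (cloneVertex G v) r' p' := by
  classical
  rw [Fintype.sum_option] at hsum
  set P : V → ℕ := fun x => p' (some x) with hP
  have hPs : ∀ x, p' (some x) = P x := fun x => rfl
  have hsum' : p' none + ∑ x, P x = Fintype.card V + 1 := hsum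
  clear hsum
  have hp'eq : p' = liftConf (p' none) P := by
    funext o; cases o <;> rfl
  obtain ⟨w0, hw0⟩ := exists_nbr hG (by omega) v
  rcases r' with _ | u
  · -- root is the clone `none`
    by_cases hb : 1 ≤ p' none
    · exact ⟨p', Relation.ReflTransGen.refl, hb⟩
    have hb0 : p' none = 0 := by omega
    by_cases ha4 : 4 ≤ P v
    · -- four pebbles on v : push two to w0, then to none
      refine solvable_tail (mkMove (clone_adj_some.2 hw0)
        (show 2 ≤ p' (some v) by rw [hPs]; omega)) ?_
      refine solvable_tail (mkMove (clone_adj_some.2 hw0)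
        (show 2 ≤ mvc p' (some v) (some w0) (some v) by rw [mvc_u, hPs]; omega)) ?_
      refine solvable_tail (mkMove (clone_adj_some_none.2 hw0)
        (show 2 ≤ mvc (mvc p' (some v) (some w0)) (some v) (some w0) (some w0) from ?_)) ?_
      · rw [mvc_w _ (show (some w0 : Option V) ≠ some v by simp [hw0.ne']),
          mvc_w _ (show (some w0 : Option V) ≠ some v by simp [hw0.ne'])]
        omega
      · refine ⟨_, Relation.ReflTransGen.refl, ?_⟩
        rw [mvc_w _ (show (none : Option V) ≠ some w0 by simp)]
        omega
    by_cases ha1 : P v ≤ 1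
    · -- few pebbles on v : use first-entry on the rest
      set P0 : V → ℕ := Function.update P v 0 with hP0
      have hs0 : (∑ x, P0 x) + P v = ∑ x, P x := sum_update_zero P v
      have hge : Fintype.card V ≤ ∑ x, P0 x := by omega
      obtain ⟨qf, hqf, hqv⟩ := solvset_ge hsolv hge v P0 rfl
      obtain ⟨z, w, hz, hadjw, h2z⟩ := first_entry hqf (by simp [hP0]) hqv
      set δ : V → ℕ := fun y => if y = v then P v else 0 with hδ
      have hPδ : P = fun y => P0 y + δ y := by
        funext y
        by_cases hy : y = v
        · subst hy; simp [hP0, hδ]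
        · simp [hP0, hδ, hy, Function.update_of_ne hy]
      have hrtgP : Relation.ReflTransGen (PebblingMove G) P (fun y => z y + δ y) := by
        rw [hPδ]; exact rtg_add δ hz
      rw [show p' = liftConf 0 P by rw [hp'eq, hb0]]
      refine solvable_rtg (rtg_lift 0 hrtgP) ?_
      refine solvable_tail (mkMove (clone_adj_some_none.2 hadjw)
        (show 2 ≤ liftConf 0 (fun y => z y + δ y) (some w) from ?_)) ?_
      · have hδw : δ w = 0 := by simp [hδ, hadjw.ne']
        rw [liftConf_some]; omega
      · refine ⟨_, Relation.ReflTransGen.refl, ?_⟩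
        rw [mvc_w _ (show (none : Option V) ≠ some w by simp)]
        omega
    · -- 2 ≤ P v ≤ 3
      by_cases hnb : ∃ w, G.Adj v w ∧ 1 ≤ P w
      · obtain ⟨w, hw, h1w⟩ := hnb
        refine solvable_tail (mkMove (clone_adj_some.2 hw)
          (show 2 ≤ p' (some v) by rw [hPs]; omega)) ?_
        refine solvable_tail (mkMove (clone_adj_some_none.2 hw)
          (show 2 ≤ mvc p' (some v) (some w) (some w) from ?_)) ?_
        · rw [mvc_w _ (show (some w : Option V) ≠ some v by simp [hw.ne']), hPs]
          omega
        · refine ⟨_, Relation.ReflTransGen.refl, ?_⟩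
          rw [mvc_w _ (show (none : Option V) ≠ some w by simp)]
          omega
      · push_neg at hnb
        set q2 : V → ℕ := Function.update P v 0 with hq2
        have hs0 : (∑ x, q2 x) + P v = ∑ x, P x := sum_update_zero P v
        have hN' : ∀ x, G.Adj v x → q2 x = 0 := by
          intro x hx
          rw [hq2, Function.update_of_ne hx.ne']
          have := hnb x hx
          omega
        have hsz : Fintype.card V - 2 ≤ ∑ x, q2 x := by omega
        obtain ⟨qt, x, hqt, hadjx, h1x⟩ :=
          deliver hG hcard hsolv v q2 (by simp [hq2]) hN' hsz
        set δ : V → ℕ := fun y => if y = v then P v else 0 with hδ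
        have hPδ : P = fun y => q2 y + δ y := by
          funext y
          by_cases hy : y = v
          · subst hy; simp [hq2, hδ]
          · simp [hq2, hδ, hy, Function.update_of_ne hy]
        have hrtgP : Relation.ReflTransGen (PebblingMove G) P (fun y => qt y + δ y) := by
          rw [hPδ]; exact rtg_add δ hqt
        rw [show p' = liftConf 0 P by rw [hp'eq, hb0]]
        refine solvable_rtg (rtg_lift 0 hrtgP) ?_
        have hδx : δ x = 0 := by simp [hδ, hadjx.ne']
        have hδv : δ v = P v := by simp [hδ]
        refine solvable_tail (mkMove (clone_adj_some.2 hadjx)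
          (show 2 ≤ liftConf 0 (fun y => qt y + δ y) (some v) from ?_)) ?_
        · rw [liftConf_some]; omega
        refine solvable_tail (mkMove (clone_adj_some_none.2 hadjx)
          (show 2 ≤ mvc (liftConf 0 fun y => qt y + δ y) (some v) (some x) (some x) from ?_)) ?_
        · rw [mvc_w _ (show (some x : Option V) ≠ some v by simp [hadjx.ne']), liftConf_some]
          omega
        · refine ⟨_, Relation.ReflTransGen.refl, ?_⟩
          rw [mvc_w _ (show (none : Option V) ≠ some x by simp)]
          omega
  · -- root is `some u`
    by_cases huv : u = v
    · subst huv
      by_cases hPv : 1 ≤ p' (some u)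
      · exact ⟨p', Relation.ReflTransGen.refl, hPv⟩
      have hPv0 : P u = 0 := by rw [← hPs]; omega
      by_cases hb4 : 4 ≤ p' none
      · -- push two pairs from none to w0, then w0 to u
        refine solvable_tail (mkMove (clone_adj_none_some.2 hw0) (show 2 ≤ p' none by omega)) ?_
        refine solvable_tail (mkMove (clone_adj_none_some.2 hw0)
          (show 2 ≤ mvc p' none (some w0) none by rw [mvc_u]; omega)) ?_
        refine solvable_tail (mkMove (clone_adj_some.2 hw0.symm)
          (show 2 ≤ mvc (mvc p' none (some w0)) none (some w0) (some w0) from ?_)) ?_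
        · rw [mvc_w _ (show (some w0 : Option V) ≠ none by simp),
            mvc_w _ (show (some w0 : Option V) ≠ none by simp)]
          omega
        · refine ⟨_, Relation.ReflTransGen.refl, ?_⟩
          rw [mvc_w _ (show (some u : Option V) ≠ some w0 by simp [hw0.ne])]
          omega
      by_cases hb1 : p' none ≤ 1
      · have hge : Fintype.card V ≤ ∑ x, P x := by omega
        obtain ⟨qf, hqf, hqv⟩ := solvset_ge hsolv hge u P rfl
        rw [hp'eq]
        exact solvable_rtg (rtg_lift (p' none) hqf) ⟨_, Relation.ReflTransGen.refl,
          by rw [liftConf_some]; exact hqv⟩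
      · -- 2 ≤ p' none ≤ 3
        by_cases hnb : ∃ w, G.Adj u w ∧ 1 ≤ P w
        · obtain ⟨w, hw, h1w⟩ := hnb
          refine solvable_tail (mkMove (clone_adj_none_some.2 hw) (show 2 ≤ p' none by omega)) ?_
          refine solvable_tail (mkMove (clone_adj_some.2 hw.symm)
            (show 2 ≤ mvc p' none (some w) (some w) from ?_)) ?_
          · rw [mvc_w _ (show (some w : Option V) ≠ none by simp), hPs]
            omega
          · refine ⟨_, Relation.ReflTransGen.refl, ?_⟩
            rw [mvc_w _ (show (some u : Option V) ≠ some w by simp [hw.ne])]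
            omega
        · push_neg at hnb
          have hN' : ∀ x, G.Adj u x → P x = 0 := by
            intro x hx
            have := hnb x hx
            omega
          have hsz : Fintype.card V - 2 ≤ ∑ x, P x := by omega
          obtain ⟨qt, x, hqt, hadjx, h1x⟩ := deliver hG hcard hsolv u P hPv0 hN' hsz
          rw [hp'eq]
          refine solvable_rtg (rtg_lift (p' none) hqt) ?_
          refine solvable_tail (mkMove (clone_adj_none_some.2 hadjx)
            (show 2 ≤ liftConf (p' none) qt none by rw [liftConf_none]; omega)) ?_
          refine solvable_tail (mkMove (clone_adj_some.2 hadjx.symm)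
            (show 2 ≤ mvc (liftConf (p' none) qt) none (some x) (some x) from ?_)) ?_
          · rw [mvc_w _ (show (some x : Option V) ≠ none by simp), liftConf_some]
            omega
          · refine ⟨_, Relation.ReflTransGen.refl, ?_⟩
            rw [mvc_w _ (show (some u : Option V) ≠ some x by simp [hadjx.ne])]
            omega
    · -- root some u with u ≠ v : merge the clone pile onto v and simulate
      set m : V → ℕ := Function.update P v (P v + 2 * (p' none / 2)) with hmdef
      have hmsum : (∑ x, m x) = (∑ x, P x) + 2 * (p' none / 2) := by
        have h1 : ∑ x, m x = (P v + 2 * (p' none / 2)) + ∑ x ∈ Finset.univ \ {v}, P x := by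
          rw [hmdef]; exact Finset.sum_update_of_mem (Finset.mem_univ v) P _
        have h2 : ∑ x, P x = P v + ∑ x ∈ Finset.univ \ {v}, P x := by
          rw [Finset.sdiff_singleton_eq_erase]
          exact (Finset.add_sum_erase _ _ (Finset.mem_univ v)).symm
        omega
      have hge : Fintype.card V ≤ ∑ x, m x := by omega
      obtain ⟨qf, hqf, hqfu⟩ := solvset_ge hsolv hge u m rfl
      have hrel0 : SimRel v m p' := by
        constructor
        · intro x hx
          rw [hmdef, Function.update_of_ne hx]
        · rw [hmdef, Function.update_self, hPs]
      obtain ⟨q'', hq'', hrel''⟩ := sim_rtg hqf hrel0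
      exact ⟨q'', hq'', by rw [hrel''.1 u huv]; exact hqfu⟩

end Clone0

open Clone0

/-- Cloning a vertex of a Class 0 graph yields a Class 0 graph. -/
theorem class0_cloneVertex {V : Type*} [Fintype V] [DecidableEq V]
    (G : SimpleGraph V) (hG : G.Connected) (hcard : 3 ≤ Fintype.card V) (v : V)
    (hG0 : Class0 G) : Class0 (cloneVertex G v) := by

  classical
  -- extract exact-size solvability in G
  have hsolvG : ∀ (r : V) (p : V → ℕ), (∑ x, p x) = Fintype.card V →
      PebblingSolvable G r p := by
    have hne : ({k : ℕ | ∀ (r : V) (p : V → ℕ), (∑ x, p x) = k →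
        PebblingSolvable G r p}).Nonempty := by
      by_contra hc
      rw [Set.not_nonempty_iff_eq_empty] at hc
      have h0 : pebblingNumber G = 0 := by
        unfold pebblingNumber
        rw [hc]
        exact Nat.sInf_empty
      rw [Class0, h0] at hG0
      omega
    have hmem := Nat.sInf_mem hne
    rw [show sInf {k : ℕ | ∀ (r : V) (p : V → ℕ), (∑ x, p x) = k →
      PebblingSolvable G r p} = pebblingNumber G from rfl, hG0] at hmem
    exact hmem
  have hmain : ∀ (r' : Option V) (p' : Option V → ℕ),
      (∑ o, p' o) = Fintype.card V + 1 → PebblingSolvable (cloneVertex G v) r' p' :=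
    fun r' p' h => main_mem hG hcard hsolvG v r' p' h
  have hlow : ¬ (∀ (r' : Option V) (p' : Option V → ℕ),
      (∑ o, p' o) = Fintype.card V → PebblingSolvable (cloneVertex G v) r' p') := by
    intro h
    set pbad : Option V → ℕ := fun o => if o = none then 0 else 1 with hpbad
    have hsumb : (∑ o, pbad o) = Fintype.card V := by
      rw [Fintype.sum_option]
      simp [hpbad]
    obtain ⟨qf, hqf, hqfr⟩ := h none pbad hsumb
    have hqe : qf = pbad := no_moves (fun o => by
      rcases o with _ | x <;> simp [hpbad]) hqf
    rw [hqe, hpbad] at hqfr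
    simp at hqfr
  show pebblingNumber (cloneVertex G v) = Fintype.card (Option V)
  rw [Fintype.card_option]
  have hmem' : (Fintype.card V + 1) ∈ {k : ℕ | ∀ (r : Option V) (p : Option V → ℕ),
      (∑ o, p o) = k → PebblingSolvable (cloneVertex G v) r p} := hmain
  apply le_antisymm
  · exact Nat.sInf_le hmem'
  · apply le_csInf ⟨Fintype.card V + 1, hmem'⟩
    intro k hk
    by_contra hlt
    push_neg at hlt
    exact hlow (solvset_ge hk (by omega))
end

section
/- For all positive integers p and q, the graph F_{p,q} is Class 0 and has exactly 2n − 5 edges, where n = p + q + 3 is its number of vertices. -/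
/-- The graph `F_{p,q}`: vertex set `{v, a, b} ∪ {s₁, …, s_p} ∪ {t₁, …, t_q}` where
`v, a, b` are encoded as `Sum.inl 0, Sum.inl 1, Sum.inl 2`, with edges `ab`,
`v sᵢ`, `sᵢ a` for `1 ≤ i ≤ p`, and `v tⱼ`, `tⱼ b` for `1 ≤ j ≤ q`. -/
def Fgraph (p q : ℕ) : SimpleGraph (Fin 3 ⊕ (Fin p ⊕ Fin q)) :=
  SimpleGraph.fromRel fun x y =>
    match x, y with
    | Sum.inl i, Sum.inl j => i = 1 ∧ j = 2
    | Sum.inl i, Sum.inr (Sum.inl _) => i = 0 ∨ i = 1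
    | Sum.inl i, Sum.inr (Sum.inr _) => i = 0 ∨ i = 2
    | _, _ => False

set_option linter.unusedSectionVars false

section Helpers

namespace FP

variable {V : Type*} [DecidableEq V] {G : SimpleGraph V} {u m r w x : V} {f f' : V → ℕ}

def mv (f : V → ℕ) (u w : V) : V → ℕ :=
  fun x => if x = u then f u - 2 else if x = w then f w + 1 else f x

lemma mv_src : mv f u w u = f u - 2 := by simp [mv]

lemma mv_tgt (h : w ≠ u) : mv f u w w = f w + 1 := by simp [mv, h]

lemma mv_other (h1 : x ≠ u) (h2 : x ≠ w) : mv f u w x = f x := by simp [mv, h1, h2]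

lemma mv_move (h : G.Adj u w) (h2 : 2 ≤ f u) : PebblingMove G f (mv f u w) := by
  refine ⟨u, w, h, h2, by simp [mv], ?_, fun x hxu hxw => ?_⟩
  · simp [mv, h.ne']
  · simp [mv, hxu, hxw]

lemma solv_self (h : 1 ≤ f r) : PebblingSolvable G r f := ⟨f, .refl, h⟩

lemma solv_step (h : PebblingMove G f f') (hs : PebblingSolvable G r f') :
    PebblingSolvable G r f := by
  obtain ⟨g, hg, hg1⟩ := hs
  exact ⟨g, .head h hg, hg1⟩

lemma solv_adj (h : G.Adj u r) (h2 : 2 ≤ f u) : PebblingSolvable G r f := by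
  refine solv_step (mv_move h h2) (solv_self ?_)
  simp [mv, h.ne']

lemma solv_two (h1 : G.Adj u m) (h2 : G.Adj m r) (hu : 2 ≤ f u) (hm : 1 ≤ f m) :
    PebblingSolvable G r f := by
  refine solv_step (mv_move h1 hu) (solv_adj h2 ?_)
  rw [mv_tgt h1.ne']
  omega

lemma solv_four (h1 : G.Adj u m) (h2 : G.Adj m r) (hu : 4 ≤ f u) :
    PebblingSolvable G r f := by
  refine solv_step (mv_move h1 (by omega)) (solv_two h1 h2 ?_ ?_)
  · rw [mv_src]; omega
  · rw [mv_tgt h1.ne']; omega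

lemma sum_le_one {n : ℕ} (g : Fin n → ℕ) (h : ∀ i, g i ≤ 1) : ∑ i, g i ≤ n := by
  calc ∑ i, g i ≤ (Finset.univ : Finset (Fin n)).card • 1 :=
        Finset.sum_le_card_nsmul _ _ _ (fun x _ => h x)
  _ = n := by simp

lemma sum_le_erase1 {n : ℕ} (g : Fin n → ℕ) (k : Fin n) (h : ∀ i, i ≠ k → g i ≤ 1) :
    ∑ i, g i ≤ g k + (n - 1) := by
  rw [← Finset.sum_erase_add _ _ (Finset.mem_univ k)]
  have : ∑ i ∈ Finset.univ.erase k, g i ≤ (Finset.univ.erase k).card • 1 :=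
    Finset.sum_le_card_nsmul _ _ _ (fun x hx => h x (Finset.mem_erase.1 hx).1)
  simp [Finset.card_erase_of_mem] at this
  omega

lemma sum_le_erase2 {n : ℕ} (g : Fin n → ℕ) (k l : Fin n) (hkl : k ≠ l)
    (h : ∀ i, i ≠ k → i ≠ l → g i ≤ 1) : ∑ i, g i ≤ g k + g l + (n - 2) := by
  rw [← Finset.sum_erase_add _ _ (Finset.mem_univ k)]
  rw [← Finset.sum_erase_add _ _ (Finset.mem_erase.2 ⟨Ne.symm hkl, Finset.mem_univ l⟩)]
  have : ∑ i ∈ (Finset.univ.erase k).erase l, g i ≤ ((Finset.univ.erase k).erase l).card • 1 :=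
    Finset.sum_le_card_nsmul _ _ _ (fun x hx => by
      rcases Finset.mem_erase.1 hx with ⟨h1, h2⟩
      exact h x (Finset.mem_erase.1 h2).1 h1)
  simp [Finset.card_erase_of_mem, Finset.mem_erase, Ne.symm hkl] at this
  omega

end FP

namespace FX
open FP
variable (p q : ℕ)
def x0 : Fin 3 ⊕ (Fin p ⊕ Fin q) := Sum.inl 0
def xa : Fin 3 ⊕ (Fin p ⊕ Fin q) := Sum.inl 1
def xb : Fin 3 ⊕ (Fin p ⊕ Fin q) := Sum.inl 2
def xs (i : Fin p) : Fin 3 ⊕ (Fin p ⊕ Fin q) := Sum.inr (Sum.inl i)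
def xt (j : Fin q) : Fin 3 ⊕ (Fin p ⊕ Fin q) := Sum.inr (Sum.inr j)

variable {p q}

lemma adj_ab : (Fgraph p q).Adj (xa p q) (xb p q) := by
  rw [Fgraph, SimpleGraph.fromRel_adj]
  exact ⟨by simp [xa, xb], Or.inl ⟨rfl, rfl⟩⟩

lemma adj_vs (i : Fin p) : (Fgraph p q).Adj (x0 p q) (xs p q i) := by
  rw [Fgraph, SimpleGraph.fromRel_adj]
  exact ⟨by simp [x0, xs], Or.inl (Or.inl rfl)⟩

lemma adj_sa (i : Fin p) : (Fgraph p q).Adj (xs p q i) (xa p q) := by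
  rw [Fgraph, SimpleGraph.fromRel_adj]
  exact ⟨by simp [xa, xs], Or.inr (Or.inr rfl)⟩

lemma adj_vt (j : Fin q) : (Fgraph p q).Adj (x0 p q) (xt p q j) := by
  rw [Fgraph, SimpleGraph.fromRel_adj]
  exact ⟨by simp [x0, xt], Or.inl (Or.inl rfl)⟩

lemma adj_tb (j : Fin q) : (Fgraph p q).Adj (xt p q j) (xb p q) := by
  rw [Fgraph, SimpleGraph.fromRel_adj]
  exact ⟨by simp [xb, xt], Or.inr (Or.inr rfl)⟩

lemma ne_ba : xb p q ≠ xa p q := by simp [xa, xb]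
lemma ne_sa (i : Fin p) : xs p q i ≠ xa p q := by simp [xs, xa]
lemma ne_sb (i : Fin p) : xs p q i ≠ xb p q := by simp [xs, xb]
lemma ne_s0 (i : Fin p) : xs p q i ≠ x0 p q := by simp [xs, x0]
lemma ne_ta (j : Fin q) : xt p q j ≠ xa p q := by simp [xt, xa]
lemma ne_tb (j : Fin q) : xt p q j ≠ xb p q := by simp [xt, xb]
lemma ne_t0 (j : Fin q) : xt p q j ≠ x0 p q := by simp [xt, x0]
lemma ne_a0 : xa p q ≠ x0 p q := by simp [xa, x0]
lemma ne_b0 : xb p q ≠ x0 p q := by simp [xb, x0]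
lemma ne_ts (j : Fin q) (i : Fin p) : xt p q j ≠ xs p q i := by simp [xt, xs]
lemma ne_st (i : Fin p) (j : Fin q) : xs p q i ≠ xt p q j := by simp [xt, xs]
lemma ne_ss {i k : Fin p} (h : i ≠ k) : xs p q i ≠ xs p q k := by simp [xs, h]
lemma ne_tt {j l : Fin q} (h : j ≠ l) : xt p q j ≠ xt p q l := by simp [xt, h]
lemma ne_0a : x0 p q ≠ xa p q := by simp [xa, x0]
lemma ne_0b : x0 p q ≠ xb p q := by simp [xb, x0]
lemma ne_0s (i : Fin p) : x0 p q ≠ xs p q i := by simp [xs, x0]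
lemma ne_0t (j : Fin q) : x0 p q ≠ xt p q j := by simp [xt, x0]
lemma ne_as (i : Fin p) : xa p q ≠ xs p q i := by simp [xs, xa]
lemma ne_at (j : Fin q) : xa p q ≠ xt p q j := by simp [xt, xa]
lemma ne_bs (i : Fin p) : xb p q ≠ xs p q i := by simp [xs, xb]
lemma ne_bt (j : Fin q) : xb p q ≠ xt p q j := by simp [xt, xb]
lemma ne_ab' : xa p q ≠ xb p q := by simp [xa, xb]

lemma sum_dec (f : Fin 3 ⊕ (Fin p ⊕ Fin q) → ℕ) :
    ∑ x, f x = f (x0 p q) + f (xa p q) + f (xb p q)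
      + ∑ i, f (xs p q i) + ∑ j, f (xt p q j) := by
  rw [Fintype.sum_sum_type, Fintype.sum_sum_type, Fin.sum_univ_three]
  simp only [x0, xa, xb, xs, xt]
  ring

lemma solv_v (hp : 0 < p) (hq : 0 < q) (f : Fin 3 ⊕ (Fin p ⊕ Fin q) → ℕ)
    (hsum : ∑ x, f x = p + q + 3) : PebblingSolvable (Fgraph p q) (x0 p q) f := by
  have i0 : Fin p := ⟨0, hp⟩
  have j0 : Fin q := ⟨0, hq⟩
  by_cases h0 : 1 ≤ f (x0 p q)
  · exact solv_self h0
  by_cases hs2 : ∃ i, 2 ≤ f (xs p q i)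
  · obtain ⟨i, hi⟩ := hs2; exact solv_adj (adj_vs i).symm hi
  by_cases ht2 : ∃ j, 2 ≤ f (xt p q j)
  · obtain ⟨j, hj⟩ := ht2; exact solv_adj (adj_vt j).symm hj
  push_neg at hs2 ht2
  by_cases hA4 : 4 ≤ f (xa p q)
  · exact solv_four (adj_sa i0).symm (adj_vs i0).symm hA4
  by_cases hB4 : 4 ≤ f (xb p q)
  · exact solv_four (adj_tb j0).symm (adj_vt j0).symm hB4
  by_cases h6 : 2 ≤ f (xa p q) ∧ ∃ i, 1 ≤ f (xs p q i)
  · obtain ⟨hA, i, hi⟩ := h6; exact solv_two (adj_sa i).symm (adj_vs i).symm hA hi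
  by_cases h7 : 2 ≤ f (xb p q) ∧ ∃ j, 1 ≤ f (xt p q j)
  · obtain ⟨hB, j, hj⟩ := h7; exact solv_two (adj_tb j).symm (adj_vt j).symm hB hj
  by_cases h8 : 2 ≤ f (xa p q) ∧ 1 ≤ f (xb p q) ∧ ∃ j, 1 ≤ f (xt p q j)
  · obtain ⟨hA, hB, j, hj⟩ := h8
    refine solv_step (mv_move adj_ab hA) (solv_two (adj_tb j).symm (adj_vt j).symm ?_ ?_)
    · rw [mv_tgt ne_ba]; omega
    · rw [mv_other (ne_ta j) (ne_tb j)]; omega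
  by_cases h9 : 2 ≤ f (xb p q) ∧ 1 ≤ f (xa p q) ∧ ∃ i, 1 ≤ f (xs p q i)
  · obtain ⟨hB, hA, i, hi⟩ := h9
    refine solv_step (mv_move adj_ab.symm hB) (solv_two (adj_sa i).symm (adj_vs i).symm ?_ ?_)
    · rw [mv_tgt ne_ab']; omega
    · rw [mv_other (ne_sb i) (ne_sa i)]; omega
  by_cases h10 : 2 ≤ f (xa p q) ∧ 3 ≤ f (xb p q)
  · obtain ⟨hA, hB⟩ := h10
    refine solv_step (mv_move adj_ab hA) (solv_four (adj_tb j0).symm (adj_vt j0).symm ?_)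
    rw [mv_tgt ne_ba]; omega
  by_cases h11 : 2 ≤ f (xb p q) ∧ 3 ≤ f (xa p q)
  · obtain ⟨hB, hA⟩ := h11
    refine solv_step (mv_move adj_ab.symm hB) (solv_four (adj_sa i0).symm (adj_vs i0).symm ?_)
    rw [mv_tgt ne_ab']; omega
  -- contradiction phase
  exfalso
  rw [sum_dec] at hsum
  have hS : ∑ i, f (xs p q i) ≤ p := sum_le_one _ (fun i => by have := hs2 i; omega)
  have hT : ∑ j, f (xt p q j) ≤ q := sum_le_one _ (fun j => by have := ht2 j; omega)
  by_cases hA2 : 2 ≤ f (xa p q)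
  · have hS0 : ∑ i, f (xs p q i) = 0 := Finset.sum_eq_zero (fun i _ => by
      by_contra hc; exact h6 ⟨hA2, i, by omega⟩)
    by_cases hB1 : 1 ≤ f (xb p q)
    · have hT0 : ∑ j, f (xt p q j) = 0 := Finset.sum_eq_zero (fun j _ => by
        by_contra hc; exact h8 ⟨hA2, hB1, j, by omega⟩)
      have nb : ¬ 3 ≤ f (xb p q) := fun h => h10 ⟨hA2, h⟩
      by_cases hB2 : 2 ≤ f (xb p q)
      · have na : ¬ 3 ≤ f (xa p q) := fun h => h11 ⟨hB2, h⟩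
        omega
      · omega
    · omega
  · by_cases hB2 : 2 ≤ f (xb p q)
    · have hT0 : ∑ j, f (xt p q j) = 0 := Finset.sum_eq_zero (fun j _ => by
        by_contra hc; exact h7 ⟨hB2, j, by omega⟩)
      by_cases hA1 : 1 ≤ f (xa p q)
      · have hS0 : ∑ i, f (xs p q i) = 0 := Finset.sum_eq_zero (fun i _ => by
          by_contra hc; exact h9 ⟨hB2, hA1, i, by omega⟩)
        omega
      · omega
    · omega


lemma solv_a (hp : 0 < p) (hq : 0 < q) (f : Fin 3 ⊕ (Fin p ⊕ Fin q) → ℕ)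
    (hsum : ∑ x, f x = p + q + 3) : PebblingSolvable (Fgraph p q) (xa p q) f := by
  have i0 : Fin p := ⟨0, hp⟩
  by_cases h0 : 1 ≤ f (xa p q)
  · exact solv_self h0
  by_cases hB2 : 2 ≤ f (xb p q)
  · exact solv_adj adj_ab.symm hB2
  by_cases hs2 : ∃ i, 2 ≤ f (xs p q i)
  · obtain ⟨i, hi⟩ := hs2; exact solv_adj (adj_sa i) hi
  push_neg at hs2
  by_cases hV4 : 4 ≤ f (x0 p q)
  · exact solv_four (adj_vs i0) (adj_sa i0) hV4
  by_cases ht4 : ∃ j, 4 ≤ f (xt p q j)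
  · obtain ⟨j, hj⟩ := ht4; exact solv_four (adj_tb j) adj_ab.symm hj
  push_neg at ht4
  by_cases h6 : 2 ≤ f (x0 p q) ∧ ∃ i, 1 ≤ f (xs p q i)
  · obtain ⟨hV, i, hi⟩ := h6; exact solv_two (adj_vs i) (adj_sa i) hV hi
  by_cases h7 : ∃ j, 2 ≤ f (xt p q j) ∧ 1 ≤ f (xb p q)
  · obtain ⟨j, hj, hB⟩ := h7; exact solv_two (adj_tb j) adj_ab.symm hj hB
  by_cases h8 : ∃ j l, j ≠ l ∧ 2 ≤ f (xt p q j) ∧ 2 ≤ f (xt p q l)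
  · obtain ⟨j, l, hjl, hj, hl⟩ := h8
    refine solv_step (mv_move (adj_tb j) hj) (solv_two (adj_tb l) adj_ab.symm ?_ ?_)
    · rw [mv_other (ne_tt (Ne.symm hjl)) (ne_tb l)]; omega
    · rw [mv_tgt (ne_bt j)]; omega
  by_cases h9 : ∃ j, 2 ≤ f (xt p q j) ∧ 3 ≤ f (x0 p q)
  · obtain ⟨j, hj, hV⟩ := h9
    refine solv_step (mv_move (adj_vt j).symm hj) (solv_four (adj_vs i0) (adj_sa i0) ?_)
    rw [mv_tgt (ne_0t j)]; omega
  by_cases h10 : ∃ j, 2 ≤ f (xt p q j) ∧ 1 ≤ f (x0 p q) ∧ ∃ i, 1 ≤ f (xs p q i)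
  · obtain ⟨j, hj, hV, i, hi⟩ := h10
    refine solv_step (mv_move (adj_vt j).symm hj) (solv_two (adj_vs i) (adj_sa i) ?_ ?_)
    · rw [mv_tgt (ne_0t j)]; omega
    · rw [mv_other (ne_st i j) (ne_s0 i)]; omega
  by_cases h11 : 2 ≤ f (x0 p q) ∧ 1 ≤ f (xb p q) ∧ ∃ j, 1 ≤ f (xt p q j)
  · obtain ⟨hV, hB, j, hj⟩ := h11
    refine solv_step (mv_move (adj_vt j) hV) (solv_two (adj_tb j) adj_ab.symm ?_ ?_)
    · rw [mv_tgt (ne_t0 j)]; omega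
    · rw [mv_other ne_b0 (ne_bt j)]; omega
  by_cases h12 : 2 ≤ f (x0 p q) ∧ ∃ j, 3 ≤ f (xt p q j)
  · obtain ⟨hV, j, hj⟩ := h12
    refine solv_step (mv_move (adj_vt j) hV) (solv_four (adj_tb j) adj_ab.symm ?_)
    rw [mv_tgt (ne_t0 j)]; omega
  by_cases h13 : 2 ≤ f (x0 p q) ∧ ∃ j l, j ≠ l ∧ 2 ≤ f (xt p q j) ∧ 1 ≤ f (xt p q l)
  · obtain ⟨hV, j, l, hjl, hj, hl⟩ := h13
    refine solv_step (mv_move (adj_tb j) hj) ?_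
    refine solv_step (mv_move (G := Fgraph p q) (f := mv f (xt p q j) (xb p q))
      (adj_vt l) ?_) (solv_two (adj_tb l) adj_ab.symm ?_ ?_)
    · rw [mv_other (ne_0t j) ne_0b]; omega
    · rw [mv_tgt (ne_t0 l), mv_other (ne_tt (Ne.symm hjl)) (ne_tb l)]; omega
    · rw [mv_other ne_b0 (ne_bt l), mv_tgt (ne_bt j)]; omega
  -- contradiction phase
  exfalso
  rw [sum_dec] at hsum
  have hS : ∑ i, f (xs p q i) ≤ p := sum_le_one _ (fun i => by have := hs2 i; omega)
  by_cases hbig : ∃ j, 2 ≤ f (xt p q j)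
  · obtain ⟨j, hj⟩ := hbig
    have hB0 : f (xb p q) = 0 := by
      by_contra hc; exact h7 ⟨j, hj, by omega⟩
    have hV2 : f (x0 p q) ≤ 2 := by
      by_contra hc; exact h9 ⟨j, hj, by omega⟩
    have hT : ∑ l, f (xt p q l) ≤ f (xt p q j) + (q - 1) :=
      sum_le_erase1 _ j (fun l hl => by
        by_contra hc; exact h8 ⟨j, l, Ne.symm hl, hj, by omega⟩)
    by_cases hV : 1 ≤ f (x0 p q)
    · have hS0 : ∑ i, f (xs p q i) = 0 := Finset.sum_eq_zero (fun i _ => by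
        by_contra hc; exact h10 ⟨j, hj, hV, i, by omega⟩)
      by_cases hV2' : 2 ≤ f (x0 p q)
      · have hj3 : f (xt p q j) ≤ 2 := by
          by_contra hc; exact h12 ⟨hV2', j, by omega⟩
        have hT0 : ∑ l, f (xt p q l) = f (xt p q j) := by
          refine Finset.sum_eq_single j (fun l _ hl => ?_) (by simp)
          by_contra hc; exact h13 ⟨hV2', j, l, Ne.symm hl, hj, by omega⟩
        omega
      · have := ht4 j; omega
    · have := ht4 j; omega
  · push_neg at hbig
    have hT : ∑ l, f (xt p q l) ≤ q := sum_le_one _ (fun l => by have := hbig l; omega)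
    by_cases hV : 2 ≤ f (x0 p q)
    · have hS0 : ∑ i, f (xs p q i) = 0 := Finset.sum_eq_zero (fun i _ => by
        by_contra hc; exact h6 ⟨hV, i, by omega⟩)
      by_cases hB : 1 ≤ f (xb p q)
      · have hT0 : ∑ l, f (xt p q l) = 0 := Finset.sum_eq_zero (fun l _ => by
          by_contra hc; exact h11 ⟨hV, hB, l, by omega⟩)
        omega
      · omega
    · omega


lemma solv_s (hp : 0 < p) (hq : 0 < q) (i : Fin p) (f : Fin 3 ⊕ (Fin p ⊕ Fin q) → ℕ)
    (hsum : ∑ x, f x = p + q + 3) : PebblingSolvable (Fgraph p q) (xs p q i) f := by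
  by_cases h0 : 1 ≤ f (xs p q i)
  · exact solv_self h0
  by_cases hV2 : 2 ≤ f (x0 p q)
  · exact solv_adj (adj_vs i) hV2
  by_cases hA2 : 2 ≤ f (xa p q)
  · exact solv_adj (adj_sa i).symm hA2
  by_cases hs4 : ∃ k, 4 ≤ f (xs p q k)
  · obtain ⟨k, hk⟩ := hs4; exact solv_four (adj_vs k).symm (adj_vs i) hk
  by_cases ht4 : ∃ j, 4 ≤ f (xt p q j)
  · obtain ⟨j, hj⟩ := ht4; exact solv_four (adj_vt j).symm (adj_vs i) hj
  push_neg at hs4 ht4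
  by_cases s6 : (∃ k, 2 ≤ f (xs p q k)) ∧ 1 ≤ f (x0 p q)
  · obtain ⟨⟨k, hk⟩, hV⟩ := s6; exact solv_two (adj_vs k).symm (adj_vs i) hk hV
  by_cases s7 : (∃ k, 2 ≤ f (xs p q k)) ∧ 1 ≤ f (xa p q)
  · obtain ⟨⟨k, hk⟩, hA⟩ := s7; exact solv_two (adj_sa k) (adj_sa i).symm hk hA
  by_cases s8 : (∃ j, 2 ≤ f (xt p q j)) ∧ 1 ≤ f (x0 p q)
  · obtain ⟨⟨j, hj⟩, hV⟩ := s8; exact solv_two (adj_vt j).symm (adj_vs i) hj hV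
  by_cases s9 : ∃ k l, k ≠ l ∧ 2 ≤ f (xs p q k) ∧ 2 ≤ f (xs p q l)
  · obtain ⟨k, l, hkl, hk, hl⟩ := s9
    refine solv_step (mv_move (adj_vs k).symm hk) (solv_two (adj_vs l).symm (adj_vs i) ?_ ?_)
    · rw [mv_other (ne_ss (Ne.symm hkl)) (ne_s0 l)]; omega
    · rw [mv_tgt (ne_0s k)]; omega
  by_cases s10 : ∃ j l, j ≠ l ∧ 2 ≤ f (xt p q j) ∧ 2 ≤ f (xt p q l)
  · obtain ⟨j, l, hjl, hj, hl⟩ := s10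
    refine solv_step (mv_move (adj_vt j).symm hj) (solv_two (adj_vt l).symm (adj_vs i) ?_ ?_)
    · rw [mv_other (ne_tt (Ne.symm hjl)) (ne_t0 l)]; omega
    · rw [mv_tgt (ne_0t j)]; omega
  by_cases s11 : ∃ k j, 2 ≤ f (xs p q k) ∧ 2 ≤ f (xt p q j)
  · obtain ⟨k, j, hk, hj⟩ := s11
    refine solv_step (mv_move (adj_vt j).symm hj) (solv_two (adj_vs k).symm (adj_vs i) ?_ ?_)
    · rw [mv_other (ne_st k j) (ne_s0 k)]; omega
    · rw [mv_tgt (ne_0t j)]; omega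
  by_cases s12 : (∃ k, 2 ≤ f (xs p q k)) ∧ 2 ≤ f (xb p q)
  · obtain ⟨⟨k, hk⟩, hB⟩ := s12
    refine solv_step (mv_move adj_ab.symm hB) (solv_two (adj_sa k) (adj_sa i).symm ?_ ?_)
    · rw [mv_other (ne_sb k) (ne_sa k)]; omega
    · rw [mv_tgt ne_ab']; omega
  by_cases s13 : (∃ j, 2 ≤ f (xt p q j)) ∧ 1 ≤ f (xa p q) ∧ 1 ≤ f (xb p q)
  · obtain ⟨⟨j, hj⟩, hA, hB⟩ := s13
    refine solv_step (mv_move (adj_tb j) hj) (solv_two adj_ab.symm (adj_sa i).symm ?_ ?_)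
    · rw [mv_tgt (ne_bt j)]; omega
    · rw [mv_other (ne_at j) ne_ab']; omega
  by_cases s14 : (∃ j, 3 ≤ f (xt p q j)) ∧ 2 ≤ f (xb p q)
  · obtain ⟨⟨j, hj⟩, hB⟩ := s14
    refine solv_step (mv_move (adj_tb j).symm hB) (solv_four (adj_vt j).symm (adj_vs i) ?_)
    rw [mv_tgt (ne_tb j)]; omega
  by_cases s15 : (∃ j, 2 ≤ f (xt p q j)) ∧ 3 ≤ f (xb p q)
  · obtain ⟨⟨j, hj⟩, hB⟩ := s15
    refine solv_step (mv_move (adj_tb j) hj) (solv_four adj_ab.symm (adj_sa i).symm ?_)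
    rw [mv_tgt (ne_bt j)]; omega
  by_cases s16 : 4 ≤ f (xb p q)
  · exact solv_four adj_ab.symm (adj_sa i).symm s16
  by_cases s17 : 2 ≤ f (xb p q) ∧ 1 ≤ f (xa p q)
  · exact solv_two adj_ab.symm (adj_sa i).symm s17.1 s17.2
  by_cases s18 : 2 ≤ f (xb p q) ∧ 1 ≤ f (x0 p q) ∧ ∃ l, 1 ≤ f (xt p q l)
  · obtain ⟨hB, hV, l, hl⟩ := s18
    refine solv_step (mv_move (adj_tb l).symm hB) (solv_two (adj_vt l).symm (adj_vs i) ?_ ?_)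
    · rw [mv_tgt (ne_tb l)]; omega
    · rw [mv_other ne_0b (ne_0t l)]; omega
  -- contradiction phase
  exfalso
  rw [sum_dec] at hsum
  have hsi : f (xs p q i) = 0 := by omega
  by_cases hbig : ∃ k, 2 ≤ f (xs p q k)
  · obtain ⟨k, hk⟩ := hbig
    have hki : k ≠ i := fun h => by rw [h, hsi] at hk; omega
    have hV0 : f (x0 p q) = 0 := by by_contra hc; exact s6 ⟨⟨k, hk⟩, by omega⟩
    have hA0 : f (xa p q) = 0 := by by_contra hc; exact s7 ⟨⟨k, hk⟩, by omega⟩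
    have hB1 : f (xb p q) ≤ 1 := by by_contra hc; exact s12 ⟨⟨k, hk⟩, by omega⟩
    have hS : ∑ m, f (xs p q m) ≤ f (xs p q k) + f (xs p q i) + (p - 2) :=
      sum_le_erase2 _ k i hki (fun m hmk hmi => by
        by_contra hc; exact s9 ⟨k, m, Ne.symm hmk, hk, by omega⟩)
    have hT : ∑ j, f (xt p q j) ≤ q := sum_le_one _ (fun j => by
      by_contra hc; exact s11 ⟨k, j, hk, by omega⟩)
    have := hs4 k
    omega
  · push_neg at hbig
    have hS : ∑ m, f (xs p q m) ≤ f (xs p q i) + (p - 1) :=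
      sum_le_erase1 _ i (fun m _ => by have := hbig m; omega)
    by_cases htbig : ∃ j, 2 ≤ f (xt p q j)
    · obtain ⟨j, hj⟩ := htbig
      have hV0 : f (x0 p q) = 0 := by by_contra hc; exact s8 ⟨⟨j, hj⟩, by omega⟩
      have hB2 : f (xb p q) ≤ 2 := by by_contra hc; exact s15 ⟨⟨j, hj⟩, by omega⟩
      have hT : ∑ l, f (xt p q l) ≤ f (xt p q j) + (q - 1) :=
        sum_le_erase1 _ j (fun l hl => by
          by_contra hc; exact s10 ⟨j, l, Ne.symm hl, hj, by omega⟩)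
      have hj4 := ht4 j
      by_cases hA : 1 ≤ f (xa p q)
      · have hB0 : f (xb p q) = 0 := by
          by_contra hc; exact s13 ⟨⟨j, hj⟩, hA, by omega⟩
        omega
      · by_cases hj3 : 3 ≤ f (xt p q j)
        · have hB1 : f (xb p q) ≤ 1 := by by_contra hc; exact s14 ⟨⟨j, hj3⟩, by omega⟩
          omega
        · omega
    · push_neg at htbig
      have hT : ∑ l, f (xt p q l) ≤ q := sum_le_one _ (fun l => by have := htbig l; omega)
      by_cases hB : 2 ≤ f (xb p q)
      · have hA0 : f (xa p q) = 0 := by by_contra hc; exact s17 ⟨hB, by omega⟩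
        by_cases hV : 1 ≤ f (x0 p q)
        · have hT0 : ∑ l, f (xt p q l) = 0 := Finset.sum_eq_zero (fun l _ => by
            by_contra hc; exact s18 ⟨hB, hV, l, by omega⟩)
          have : f (xb p q) ≤ 3 := by omega
          omega
        · omega
      · omega


lemma move_transport {V W : Type*} {G : SimpleGraph V} {H : SimpleGraph W} (e : V ≃ W)
    (he : ∀ x y, G.Adj x y → H.Adj (e x) (e y)) {c d : V → ℕ}
    (h : PebblingMove G c d) :
    PebblingMove H (fun w => c (e.symm w)) (fun w => d (e.symm w)) := by
  obtain ⟨u, v, hadj, h2, hu, hv, ho⟩ := h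
  refine ⟨e u, e v, he _ _ hadj, ?_, ?_, ?_, ?_⟩
  · simpa using h2
  · simpa using hu
  · simpa using hv
  · intro x hxu hxv
    refine ho (e.symm x) (fun h => hxu ?_) (fun h => hxv ?_)
    · rw [← e.apply_symm_apply x, h]
    · rw [← e.apply_symm_apply x, h]

lemma solv_transport {V W : Type*} {G : SimpleGraph V} {H : SimpleGraph W} (e : V ≃ W)
    (he : ∀ x y, G.Adj x y → H.Adj (e x) (e y)) {r : V} {f : W → ℕ}
    (hs : PebblingSolvable G r (fun x => f (e x))) : PebblingSolvable H (e r) f := by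
  obtain ⟨g, hg, h1⟩ := hs
  refine ⟨fun w => g (e.symm w), ?_, by simpa using h1⟩
  have lift := Relation.ReflTransGen.lift (fun (c : V → ℕ) => (fun w => c (e.symm w)))
    (fun c d hcd => move_transport e he hcd) _ _ hg
  have lift' : Relation.ReflTransGen (PebblingMove H) (fun w => f (e (e.symm w)))
      (fun w => g (e.symm w)) := lift
  have hstart : (fun w => f (e (e.symm w))) = f := funext fun w => by rw [e.apply_symm_apply]
  rwa [hstart] at lift'

def eqv (p q : ℕ) : (Fin 3 ⊕ (Fin q ⊕ Fin p)) ≃ (Fin 3 ⊕ (Fin p ⊕ Fin q)) :=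
  Equiv.sumCongr (Equiv.swap (1 : Fin 3) 2) (Equiv.sumComm (Fin q) (Fin p))

lemma eqv_adj {p q : ℕ} (x y : Fin 3 ⊕ (Fin q ⊕ Fin p)) (h : (Fgraph q p).Adj x y) :
    (Fgraph p q).Adj (eqv p q x) (eqv p q y) := by
  rw [Fgraph, SimpleGraph.fromRel_adj] at h ⊢
  obtain ⟨hne, h⟩ := h
  refine ⟨(Equiv.injective _).ne hne, ?_⟩
  rcases x with i | (k | k) <;> rcases y with j | (l | l) <;>
    simp only [eqv, Equiv.sumCongr_apply, Sum.map_inl, Sum.map_inr, Equiv.sumComm_apply,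
      Sum.swap_inl, Sum.swap_inr] <;>
    first
    | exact h.elim (fun h => h.elim) (fun h => h.elim)
    | (rcases h with ⟨rfl, rfl⟩ | ⟨rfl, rfl⟩
       exacts [Or.inr ⟨by decide, by decide⟩, Or.inl ⟨by decide, by decide⟩])
    | (rcases h with (rfl | rfl) | h
       exacts [Or.inl (Or.inl (by decide)), Or.inl (Or.inr (by decide)), h.elim])
    | (rcases h with h | (rfl | rfl)
       exacts [h.elim, Or.inr (Or.inl (by decide)), Or.inr (Or.inr (by decide))])

lemma solv_b (hp : 0 < p) (hq : 0 < q) (f : Fin 3 ⊕ (Fin p ⊕ Fin q) → ℕ)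
    (hsum : ∑ x, f x = p + q + 3) : PebblingSolvable (Fgraph p q) (xb p q) f := by
  have hsum' : ∑ x, f (eqv p q x) = q + p + 3 := by
    rw [Equiv.sum_comp (eqv p q) f, hsum]; ring
  have := solv_transport (eqv p q) (eqv_adj) (r := xa q p)
    (solv_a hq hp _ hsum')
  have hxb : eqv p q (xa q p) = xb p q := by
    simp [eqv, xa, xb, Equiv.swap_apply_left]
  rwa [hxb] at this

lemma solv_t (hp : 0 < p) (hq : 0 < q) (j : Fin q) (f : Fin 3 ⊕ (Fin p ⊕ Fin q) → ℕ)
    (hsum : ∑ x, f x = p + q + 3) : PebblingSolvable (Fgraph p q) (xt p q j) f := by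
  have hsum' : ∑ x, f (eqv p q x) = q + p + 3 := by
    rw [Equiv.sum_comp (eqv p q) f, hsum]; ring
  have := solv_transport (eqv p q) (eqv_adj) (r := xs q p j)
    (solv_s hq hp j _ hsum')
  have hxt : eqv p q (xs q p j) = xt p q j := by
    simp [eqv, xs, xt]
  rwa [hxt] at this

lemma solv_all (hp : 0 < p) (hq : 0 < q) (r : Fin 3 ⊕ (Fin p ⊕ Fin q))
    (f : Fin 3 ⊕ (Fin p ⊕ Fin q) → ℕ) (hsum : ∑ x, f x = p + q + 3) :
    PebblingSolvable (Fgraph p q) r f := by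
  rcases r with i | (k | l)
  · fin_cases i
    · exact solv_v hp hq f hsum
    · exact solv_a hp hq f hsum
    · exact solv_b hp hq f hsum
  · exact solv_s hp hq k f hsum
  · exact solv_t hp hq l f hsum


lemma card_Vx : Fintype.card (Fin 3 ⊕ (Fin p ⊕ Fin q)) = p + q + 3 := by
  simp [Fintype.card_sum]; ring

lemma pebbling_eq (hp : 0 < p) (hq : 0 < q) : pebblingNumber (Fgraph p q) = p + q + 3 := by
  have hmem : (p + q + 3) ∈ {k : ℕ | ∀ (r : Fin 3 ⊕ (Fin p ⊕ Fin q)) (f : Fin 3 ⊕ (Fin p ⊕ Fin q) → ℕ),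
      (∑ v, f v) = k → PebblingSolvable (Fgraph p q) r f} :=
    fun r f hsum => solv_all hp hq r f hsum
  apply le_antisymm
  · exact Nat.sInf_le hmem
  · refine le_csInf ⟨_, hmem⟩ (fun k hk => ?_)
    by_contra hlt
    push_neg at hlt
    have hle : k ≤ (Finset.univ.erase (x0 p q)).card := by
      rw [Finset.card_erase_of_mem (Finset.mem_univ _), Finset.card_univ, card_Vx]
      omega
    obtain ⟨s, hsub, hcard⟩ := Finset.exists_subset_card_eq hle
    have hx0 : x0 p q ∉ s := fun hm => (Finset.mem_erase.1 (hsub hm)).1 rfl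
    set f : Fin 3 ⊕ (Fin p ⊕ Fin q) → ℕ := (fun x => if x ∈ s then 1 else 0) with hf
    have hsumf : ∑ x, f x = k := by
      rw [hf]
      rw [Finset.sum_ite_mem]
      simp [Finset.univ_inter, hcard]
    obtain ⟨g, hg, hg1⟩ := hk (x0 p q) f hsumf
    rcases Relation.ReflTransGen.cases_head hg with heq | ⟨c, hmove, -⟩
    · have hfx0 : f (x0 p q) = 0 := by rw [hf]; simp [hx0]
      rw [← heq] at hg1
      omega
    · obtain ⟨u, w, -, h2, -⟩ := hmove
      have : f u ≤ 1 := by rw [hf]; dsimp only; split <;> omega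
      omega

def frel (p q : ℕ) : (Fin 3 ⊕ (Fin p ⊕ Fin q)) → (Fin 3 ⊕ (Fin p ⊕ Fin q)) → Prop := fun x y =>
  match x, y with
  | Sum.inl i, Sum.inl j => i = 1 ∧ j = 2
  | Sum.inl i, Sum.inr (Sum.inl _) => i = 0 ∨ i = 1
  | Sum.inl i, Sum.inr (Sum.inr _) => i = 0 ∨ i = 2
  | _, _ => False

instance instDecFrel : ∀ x y, Decidable (frel p q x y) := fun x y =>
  match x, y with
  | Sum.inl _, Sum.inl _ => inferInstanceAs (Decidable (_ ∧ _))
  | Sum.inl _, Sum.inr (Sum.inl _) => inferInstanceAs (Decidable (_ ∨ _))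
  | Sum.inl _, Sum.inr (Sum.inr _) => inferInstanceAs (Decidable (_ ∨ _))
  | Sum.inr _, _ => inferInstanceAs (Decidable False)

instance instDecFAdj : DecidableRel (Fgraph p q).Adj := fun x y =>
  decidable_of_iff (x ≠ y ∧ (frel p q x y ∨ frel p q y x))
    ((SimpleGraph.fromRel_adj (frel p q) x y).symm)

lemma na_00 : ¬ (Fgraph p q).Adj (x0 p q) (x0 p q) := SimpleGraph.irrefl _
lemma na_aa : ¬ (Fgraph p q).Adj (xa p q) (xa p q) := SimpleGraph.irrefl _
lemma na_bb : ¬ (Fgraph p q).Adj (xb p q) (xb p q) := SimpleGraph.irrefl _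

lemma na_0a : ¬ (Fgraph p q).Adj (x0 p q) (xa p q) := by
  show ¬ (Fgraph p q).Adj (Sum.inl 0) (Sum.inl 1)
  rw [Fgraph, SimpleGraph.fromRel_adj]
  rintro ⟨hne, ⟨h1, h2⟩ | ⟨h1, h2⟩⟩ <;> exact absurd h2 (by decide)
lemma na_0b : ¬ (Fgraph p q).Adj (x0 p q) (xb p q) := by
  show ¬ (Fgraph p q).Adj (Sum.inl 0) (Sum.inl 2)
  rw [Fgraph, SimpleGraph.fromRel_adj]
  rintro ⟨hne, ⟨h1, h2⟩ | ⟨h1, h2⟩⟩ <;> exact absurd h1 (by decide)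
lemma na_at (j : Fin q) : ¬ (Fgraph p q).Adj (xa p q) (xt p q j) := by
  show ¬ (Fgraph p q).Adj (Sum.inl 1) (Sum.inr (Sum.inr j))
  rw [Fgraph, SimpleGraph.fromRel_adj]
  rintro ⟨hne, h | h⟩
  · rcases h with h | h <;> exact absurd h (by decide)
  · exact h
lemma na_bs (i : Fin p) : ¬ (Fgraph p q).Adj (xb p q) (xs p q i) := by
  show ¬ (Fgraph p q).Adj (Sum.inl 2) (Sum.inr (Sum.inl i))
  rw [Fgraph, SimpleGraph.fromRel_adj]
  rintro ⟨hne, h | h⟩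
  · rcases h with h | h <;> exact absurd h (by decide)
  · exact h
lemma na_ss (i k : Fin p) : ¬ (Fgraph p q).Adj (xs p q i) (xs p q k) := by
  rw [Fgraph, SimpleGraph.fromRel_adj]
  rintro ⟨hne, h | h⟩ <;> exact h
lemma na_st (i : Fin p) (j : Fin q) : ¬ (Fgraph p q).Adj (xs p q i) (xt p q j) := by
  rw [Fgraph, SimpleGraph.fromRel_adj]
  rintro ⟨hne, h | h⟩ <;> exact h
lemma na_tt (j l : Fin q) : ¬ (Fgraph p q).Adj (xt p q j) (xt p q l) := by
  rw [Fgraph, SimpleGraph.fromRel_adj]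
  rintro ⟨hne, h | h⟩ <;> exact h

lemma edge_count : (Fgraph p q).edgeSet.ncard = 2 * (p + q) + 1 := by
  have h1 : (Fgraph p q).edgeSet.ncard = (Fgraph p q).edgeFinset.card :=
    Set.ncard_eq_toFinset_card' _
  have h2 : ∑ x, (Fgraph p q).degree x = 2 * (Fgraph p q).edgeFinset.card :=
    SimpleGraph.sum_degrees_eq_twice_card_edges _
  have hdegx : ∀ x, (Fgraph p q).degree x
      = ∑ y, (if (Fgraph p q).Adj x y then 1 else 0) := fun x => by
    rw [show (Fgraph p q).degree x = ((Fgraph p q).neighborFinset x).card from rfl,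
      SimpleGraph.neighborFinset_eq_filter, Finset.card_filter]
  have d0 : (Fgraph p q).degree (x0 p q) = p + q := by
    rw [hdegx, sum_dec, if_neg na_00, if_neg na_0a, if_neg na_0b,
      Finset.sum_congr rfl (fun i _ => if_pos (adj_vs i)),
      Finset.sum_congr rfl (fun j _ => if_pos (adj_vt j))]
    simp
  have da : (Fgraph p q).degree (xa p q) = p + 1 := by
    rw [hdegx, sum_dec, if_neg (fun h => na_0a h.symm), if_neg na_aa, if_pos adj_ab,
      Finset.sum_congr rfl (fun i _ => if_pos (adj_sa i).symm),
      Finset.sum_congr rfl (fun j _ => if_neg (na_at j))]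
    simp
    omega
  have db : (Fgraph p q).degree (xb p q) = q + 1 := by
    rw [hdegx, sum_dec, if_neg (fun h => na_0b h.symm), if_pos adj_ab.symm, if_neg na_bb,
      Finset.sum_congr rfl (fun i _ => if_neg (na_bs i)),
      Finset.sum_congr rfl (fun j _ => if_pos (adj_tb j).symm)]
    simp
    omega
  have ds : ∀ i, (Fgraph p q).degree (xs p q i) = 2 := fun i => by
    rw [hdegx, sum_dec, if_pos (adj_vs i).symm, if_pos (adj_sa i), if_neg (fun h => na_bs i h.symm),
      Finset.sum_congr rfl (fun k _ => if_neg (na_ss i k)),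
      Finset.sum_congr rfl (fun j _ => if_neg (na_st i j))]
    simp
  have dt : ∀ j, (Fgraph p q).degree (xt p q j) = 2 := fun j => by
    rw [hdegx, sum_dec, if_pos (adj_vt j).symm, if_neg (fun h => na_at j h.symm), if_pos (adj_tb j),
      Finset.sum_congr rfl (fun i _ => if_neg (fun h => na_st i j h.symm)),
      Finset.sum_congr rfl (fun l _ => if_neg (na_tt j l))]
    simp
  rw [sum_dec, d0, da, db] at h2
  rw [Finset.sum_congr rfl (fun i _ => ds i), Finset.sum_congr rfl (fun j _ => dt j)] at h2
  simp only [Finset.sum_const, Finset.card_univ, smul_eq_mul, Fintype.card_fin] at h2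
  omega

end FX

end Helpers

/-- For all positive `p, q`, the graph `F_{p,q}` is Class 0 and has exactly `2n - 5`
edges, where `n = p + q + 3` is its number of vertices. -/
theorem class0_Fgraph (p q : ℕ) (hp : 0 < p) (hq : 0 < q) :
    Class0 (Fgraph p q) ∧ (Fgraph p q).edgeSet.ncard = 2 * (p + q + 3) - 5 := by
  constructor
  · show pebblingNumber (Fgraph p q) = _
    rw [FX.pebbling_eq hp hq, FX.card_Vx]
  · rw [FX.edge_count]
    omega
end

section
/- Let G be a finite connected simple graph on n vertices with diameter 2 and no cut-vertex. Then the number of edges of G satisfies e(G) ≥ 2n − 5. In particular, every n-vertex Class 0 graph of diameter 2 has at least 2n − 5 edges. -/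
/-- A cut-vertex of a graph: a vertex whose removal disconnects the graph. -/
def IsCutVertex {V : Type*} (G : SimpleGraph V) (v : V) : Prop :=
  ¬ (G.induce ({v}ᶜ : Set V)).Preconnected

open Finset SimpleGraph

section Aux
variable {V : Type*}



def grestrict (G : SimpleGraph V) (S : Finset V) [DecidableEq V] : SimpleGraph V where
  Adj x y := G.Adj x y ∧ x ∈ S ∧ y ∈ S
  symm := ⟨by rintro x y ⟨h, hx, hy⟩; exact ⟨h.symm, hy, hx⟩⟩
  loopless := ⟨fun x h => G.irrefl h.1⟩

instance [DecidableEq V] (G : SimpleGraph V) [DecidableRel G.Adj] (S : Finset V) :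
    DecidableRel (grestrict G S).Adj := fun x y => by
  unfold grestrict; infer_instance

lemma grestrict_le [DecidableEq V] (G : SimpleGraph V) (S : Finset V) : grestrict G S ≤ G :=
  fun _ _ h => h.1

lemma grestrict_adj [DecidableEq V] {G : SimpleGraph V} {S : Finset V} {x y : V} :
    (grestrict G S).Adj x y ↔ G.Adj x y ∧ x ∈ S ∧ y ∈ S := Iff.rfl

lemma grestrict_edge_mem [Fintype V] [DecidableEq V] {G : SimpleGraph V} [DecidableRel G.Adj]
    {S : Finset V} {e : Sym2 V} (he : e ∈ (grestrict G S).edgeFinset) : ∀ x ∈ e, x ∈ S := by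
  induction e with
  | _ x y =>
    rw [SimpleGraph.mem_edgeFinset, SimpleGraph.mem_edgeSet] at he
    intro z hz
    rw [Sym2.mem_iff] at hz
    rcases hz with rfl | rfl
    · exact he.2.1
    · exact he.2.2

/-- Restricted handshake: the sum over `M` of the number of neighbors inside `M`
equals twice the number of edges inside `M`. -/
lemma sum_deg_restrict [Fintype V] [DecidableEq V] (G : SimpleGraph V) [DecidableRel G.Adj]
    (M : Finset V) :
    ∑ w ∈ M, (G.neighborFinset w ∩ M).card = 2 * (grestrict G M).edgeFinset.card := by
  have hh := (grestrict G M).sum_degrees_eq_twice_card_edges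
  rw [← hh]
  rw [← Finset.sum_subset (Finset.subset_univ M)]
  · apply Finset.sum_congr rfl
    intro w hw
    rw [SimpleGraph.degree]
    congr 1
    ext x
    simp only [SimpleGraph.mem_neighborFinset, grestrict_adj, Finset.mem_inter,
      SimpleGraph.mem_neighborFinset]
    tauto
  · intro w _ hw
    rw [SimpleGraph.degree, Finset.card_eq_zero]
    ext x
    rw [SimpleGraph.mem_neighborFinset, grestrict_adj]
    simp only [Finset.notMem_empty, iff_false]
    rintro ⟨-, h2, -⟩
    exact hw h2

/-- Base edge count: edges at `u`, edges between `N(u)` and `M`, and edges inside `M`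
are disjoint collections. -/
lemma base_count [Fintype V] [DecidableEq V] (G : SimpleGraph V) [DecidableRel G.Adj] (u : V) :
    G.degree u
      + (∑ w ∈ (Finset.univ.erase u) \ G.neighborFinset u,
          (G.neighborFinset w ∩ G.neighborFinset u).card)
      + (grestrict G ((Finset.univ.erase u) \ G.neighborFinset u)).edgeFinset.card
      ≤ G.edgeFinset.card := by
  classical
  set N := G.neighborFinset u with hN
  set M := (Finset.univ.erase u) \ N with hM
  have huN : u ∉ N := by rw [hN, SimpleGraph.mem_neighborFinset]; exact G.irrefl
  have huM : u ∉ M := by rw [hM]; simp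
  have hNM : ∀ x ∈ M, x ∉ N := by intro x hx; rw [hM] at hx; exact (Finset.mem_sdiff.mp hx).2
  set E1 := G.incidenceFinset u with hE1
  set ENM := M.biUnion (fun w => (G.neighborFinset w ∩ N).image (fun z => s(z, w))) with hENM
  set EM := (grestrict G M).edgeFinset with hEM
  have hE1card : E1.card = G.degree u := G.card_incidenceFinset_eq_degree u
  have hENMcard : ENM.card = ∑ w ∈ M, (G.neighborFinset w ∩ N).card := by
    rw [hENM, Finset.card_biUnion]
    · apply Finset.sum_congr rfl
      intro w hw
      apply Finset.card_image_of_injOn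
      intro z hz z' hz' heq
      rw [Finset.mem_coe, Finset.mem_inter] at hz hz'
      rw [Sym2.eq_iff] at heq
      rcases heq with ⟨h1, -⟩ | ⟨h1, h2⟩
      · exact h1
      · exfalso; exact hNM w hw (h1 ▸ hz.2)
    · intro w hw w' hw' hne
      simp only [Function.onFun]
      rw [Finset.disjoint_left]
      intro e he he'
      rw [Finset.mem_image] at he he'
      obtain ⟨z, hz, rfl⟩ := he
      obtain ⟨z', hz', heq⟩ := he'
      rw [Finset.mem_inter] at hz hz'
      rw [Sym2.eq_iff] at heq
      rcases heq with ⟨-, h2⟩ | ⟨-, h2⟩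
      · exact hne h2.symm
      · exact hNM w' hw' (by rw [h2]; exact hz.2)
  -- memberships of endpoints
  have hE1mem : ∀ e ∈ E1, u ∈ e := by
    intro e he
    rw [hE1, SimpleGraph.mem_incidenceFinset] at he
    exact he.2
  have hENM_no_u : ∀ e ∈ ENM, u ∉ e := by
    intro e he
    rw [hENM, Finset.mem_biUnion] at he
    obtain ⟨w, hw, he⟩ := he
    rw [Finset.mem_image] at he
    obtain ⟨z, hz, rfl⟩ := he
    rw [Finset.mem_inter] at hz
    rw [Sym2.mem_iff]
    rintro (rfl | rfl)
    · exact huN hz.2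
    · exact huM hw
  have hENM_has_N : ∀ e ∈ ENM, ∃ z ∈ e, z ∈ N := by
    intro e he
    rw [hENM, Finset.mem_biUnion] at he
    obtain ⟨w, hw, he⟩ := he
    rw [Finset.mem_image] at he
    obtain ⟨z, hz, rfl⟩ := he
    rw [Finset.mem_inter] at hz
    exact ⟨z, Sym2.mem_mk_left z w, hz.2⟩
  have hEM_mem : ∀ e ∈ EM, ∀ x ∈ e, x ∈ M := fun e he => grestrict_edge_mem he
  -- subsets
  have hs1 : E1 ⊆ G.edgeFinset := by
    intro e he
    rw [hE1, SimpleGraph.mem_incidenceFinset] at he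
    rw [SimpleGraph.mem_edgeFinset]
    exact he.1
  have hs2 : ENM ⊆ G.edgeFinset := by
    intro e he
    rw [hENM, Finset.mem_biUnion] at he
    obtain ⟨w, hw, he⟩ := he
    rw [Finset.mem_image] at he
    obtain ⟨z, hz, rfl⟩ := he
    rw [Finset.mem_inter, SimpleGraph.mem_neighborFinset] at hz
    rw [SimpleGraph.mem_edgeFinset, SimpleGraph.mem_edgeSet]
    exact hz.1.symm
  have hs3 : EM ⊆ G.edgeFinset := by
    rw [hEM]
    exact SimpleGraph.edgeFinset_mono (grestrict_le G M)
  -- disjointness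
  have hd12 : Disjoint E1 ENM := by
    rw [Finset.disjoint_left]
    intro e he he'
    exact hENM_no_u e he' (hE1mem e he)
  have hd13 : Disjoint E1 EM := by
    rw [Finset.disjoint_left]
    intro e he he'
    exact huM (hEM_mem e he' u (hE1mem e he))
  have hd23 : Disjoint ENM EM := by
    rw [Finset.disjoint_left]
    intro e he he'
    obtain ⟨z, hz, hzN⟩ := hENM_has_N e he
    exact hNM z (hEM_mem e he' z hz) hzN
  have hunion : ((E1 ∪ ENM) ∪ EM).card = E1.card + ENM.card + EM.card := by
    rw [Finset.card_union_of_disjoint, Finset.card_union_of_disjoint hd12]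
    rw [Finset.disjoint_union_left]
    exact ⟨hd13, hd23⟩
  have hsub : (E1 ∪ ENM) ∪ EM ⊆ G.edgeFinset := by
    apply Finset.union_subset (Finset.union_subset hs1 hs2) hs3
  have := Finset.card_le_card hsub
  rw [hunion] at this
  omega

lemma exists_closer (H : SimpleGraph V) {x t0 : V} (h : H.Reachable x t0) (hne : x ≠ t0) :
    ∃ y, H.Adj x y ∧ H.dist y t0 < H.dist x t0 := by
  have hd : H.dist x t0 ≠ 0 := by
    rw [SimpleGraph.dist_ne_zero_iff_ne_and_reachable]; exact ⟨hne, h⟩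
  obtain ⟨p, hp⟩ := SimpleGraph.exists_walk_of_dist_ne_zero hd
  cases p with
  | nil => exact absurd rfl hne
  | @cons _ y _ hadj q =>
    refine ⟨y, hadj, ?_⟩
    have h1 : H.dist y t0 ≤ q.length := SimpleGraph.dist_le q
    rw [SimpleGraph.Walk.length_cons] at hp
    omega

lemma comp_bound [Fintype V] [DecidableEq V] (H : SimpleGraph V) [DecidableRel H.Adj]
    (T : Finset V) (hT : ∀ x ∈ T, ∀ y ∈ T, H.Reachable x y) :
    T.card ≤ H.edgeFinset.card + 1 := by
  rcases T.eq_empty_or_nonempty with rfl | ⟨t0, ht0⟩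
  · simp
  have key : ∀ x ∈ T.erase t0, ∃ y, H.Adj x y ∧ H.dist y t0 < H.dist x t0 := fun x hx =>
    exists_closer H (hT x (Finset.mem_of_mem_erase hx) t0 ht0) (Finset.ne_of_mem_erase hx)
  classical
  choose f hf1 hf2 using key
  set g : V → Sym2 V := fun x =>
    if hx : x ∈ T.erase t0 then s(x, f x hx) else s(x, x) with hg
  have hcard : (T.erase t0).card ≤ H.edgeFinset.card := by
    apply Finset.card_le_card_of_injOn g
    · intro x hx
      rw [Finset.mem_coe] at hx ⊢
      rw [hg]; simp only [dif_pos hx]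
      rw [SimpleGraph.mem_edgeFinset, SimpleGraph.mem_edgeSet]
      exact hf1 x hx
    · intro x hx x' hx' heq
      rw [Finset.mem_coe] at hx hx'
      rw [hg] at heq; simp only [dif_pos hx, dif_pos hx'] at heq
      rw [Sym2.eq_iff] at heq
      rcases heq with ⟨h1, h2⟩ | ⟨h1, h2⟩
      · exact h1
      · exfalso
        have d1 := hf2 x hx
        have d2 := hf2 x' hx'
        rw [← h1] at d2
        rw [h2] at d1
        omega
  have := Finset.card_erase_of_mem ht0
  omega

lemma two_step {G : SimpleGraph V} (hG : G.Connected) (hdiam : G.diam = 2) {x y : V}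
    (hne : x ≠ y) : G.Adj x y ∨ ∃ z, G.Adj x z ∧ G.Adj z y := by
  have hnt : G.ediam ≠ ⊤ := SimpleGraph.ediam_ne_top_of_diam_ne_zero (by rw [hdiam]; norm_num)
  have h2 : G.dist x y ≤ 2 := by
    have := SimpleGraph.dist_le_diam hnt (u := x) (v := y)
    omega
  have hd : G.dist x y ≠ 0 := by
    rw [SimpleGraph.dist_ne_zero_iff_ne_and_reachable]; exact ⟨hne, hG.preconnected x y⟩
  obtain ⟨p, hp⟩ := SimpleGraph.exists_walk_of_dist_ne_zero hd
  cases p with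
  | nil => exact absurd rfl hne
  | @cons _ z _ h1 q =>
    cases q with
    | nil => exact Or.inl h1
    | @cons _ z2 _ h2' q2 =>
      cases q2 with
      | nil => exact Or.inr ⟨z, h1, h2'⟩
      | cons h3 q3 =>
        exfalso
        simp only [SimpleGraph.Walk.length_cons] at hp
        omega

/-- The one-side-empty case for minimum degree two. -/
lemma delta2_empty [Fintype V] [DecidableEq V] (G : SimpleGraph V) [DecidableRel G.Adj]
    (hG : G.Connected) (hdiam : G.diam = 2)
    (hdom : ∀ v : V, ∃ x, x ≠ v ∧ ¬G.Adj v x)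
    (u a b : V) (hab : a ≠ b) (hN : G.neighborFinset u = {a, b})
    (hB : ((Finset.univ.erase u \ G.neighborFinset u).filter
        (fun w => G.Adj b w ∧ ¬ G.Adj a w)) = ∅) :
    (2 * Fintype.card V - 5 : ℤ) ≤ (G.edgeFinset.card : ℤ) := by
  classical
  set M := Finset.univ.erase u \ G.neighborFinset u with hM
  have haN : a ∈ G.neighborFinset u := by rw [hN]; simp
  have hbN : b ∈ G.neighborFinset u := by rw [hN]; simp
  have hua : G.Adj u a := by rwa [SimpleGraph.mem_neighborFinset] at haN
  have hub : G.Adj u b := by rwa [SimpleGraph.mem_neighborFinset] at hbN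
  have hMmem : ∀ w ∈ M, w ≠ u ∧ w ∉ G.neighborFinset u := by
    intro w hw
    rw [hM, Finset.mem_sdiff, Finset.mem_erase] at hw
    exact ⟨hw.1.1, hw.2⟩
  have hclass : ∀ x : V, x = u ∨ x = a ∨ x = b ∨ x ∈ M := by
    intro x
    by_cases hxu : x = u
    · exact Or.inl hxu
    by_cases hxN : x ∈ G.neighborFinset u
    · rw [hN] at hxN
      simp only [Finset.mem_insert, Finset.mem_singleton] at hxN
      tauto
    · refine Or.inr (Or.inr (Or.inr ?_))
      rw [hM, Finset.mem_sdiff, Finset.mem_erase]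
      exact ⟨⟨hxu, Finset.mem_univ x⟩, hxN⟩
  have hAM : ∀ w ∈ M, G.Adj a w := by
    intro w hw
    obtain ⟨hwu, hwN⟩ := hMmem w hw
    rcases two_step hG hdiam (Ne.symm hwu) with hadj | ⟨z, hz1, hz2⟩
    · exfalso; apply hwN; rwa [SimpleGraph.mem_neighborFinset]
    · have hzN : z ∈ G.neighborFinset u := by rwa [SimpleGraph.mem_neighborFinset]
      rw [hN] at hzN
      simp only [Finset.mem_insert, Finset.mem_singleton] at hzN
      rcases hzN with h | h
      · rw [← h]; exact hz2
      · by_contra hnaw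
        have hwB : w ∈ M.filter (fun w => G.Adj b w ∧ ¬ G.Adj a w) := by
          rw [Finset.mem_filter]
          exact ⟨hw, by rw [← h]; exact hz2, hnaw⟩
        rw [hB] at hwB
        exact absurd hwB (Finset.notMem_empty w)
  set A := M.filter (fun w => ¬ G.Adj b w) with hA
  set C := M.filter (fun w => G.Adj b w) with hC
  have hMsplit : A ∪ C = M := by
    rw [hA, hC, ← Finset.filter_or]
    rw [Finset.filter_true_of_mem]
    intro w _; tauto
  have hACdisj : Disjoint A C := by
    rw [hA, hC, Finset.disjoint_left]
    intro w hw hw'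
    rw [Finset.mem_filter] at hw hw'
    exact hw.2 hw'.2
  have hdegu : G.degree u = 2 := by
    rw [SimpleGraph.degree, hN, Finset.card_insert_of_notMem (by simp [hab]),
      Finset.card_singleton]
  have hbc := base_count G u
  rw [← hM, hdegu] at hbc
  have hcardM : Fintype.card V - 1 = 2 + M.card := by
    have hNsub : G.neighborFinset u ⊆ Finset.univ.erase u := by
      intro x hx
      rw [SimpleGraph.mem_neighborFinset] at hx
      rw [Finset.mem_erase]
      exact ⟨hx.ne', Finset.mem_univ x⟩
    have h1 : M.card = (Finset.univ.erase u).card - (G.neighborFinset u).card := by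
      rw [hM, Finset.card_sdiff_of_subset hNsub]
    have h2 : (Finset.univ.erase u).card = Fintype.card V - 1 := by
      rw [Finset.card_erase_of_mem (Finset.mem_univ u), Finset.card_univ]
    have h3 := Finset.card_le_card hNsub
    have h4 : (G.neighborFinset u).card = 2 := hdegu
    omega
  have hcardAC : A.card + C.card = M.card := by
    rw [← Finset.card_union_of_disjoint hACdisj, hMsplit]
  have hTbound : A.card * 1 + C.card * 2 ≤
      ∑ w ∈ M, (G.neighborFinset w ∩ G.neighborFinset u).card := by
    rw [← hMsplit, Finset.sum_union hACdisj]
    have hTA := Finset.card_nsmul_le_sum A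
      (fun w => (G.neighborFinset w ∩ G.neighborFinset u).card) 1 ?_
    · have hTC := Finset.card_nsmul_le_sum C
        (fun w => (G.neighborFinset w ∩ G.neighborFinset u).card) 2 ?_
      · simp only [smul_eq_mul] at hTA hTC
        omega
      · intro w hw
        rw [hC, Finset.mem_filter] at hw
        have hsub : ({a, b} : Finset V) ⊆ G.neighborFinset w ∩ G.neighborFinset u := by
          intro x hx
          simp only [Finset.mem_insert, Finset.mem_singleton] at hx
          rw [Finset.mem_inter, SimpleGraph.mem_neighborFinset, SimpleGraph.mem_neighborFinset]
          rcases hx with rfl | rfl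
          · exact ⟨(hAM w hw.1).symm, hua⟩
          · exact ⟨hw.2.symm, hub⟩
        have := Finset.card_le_card hsub
        rwa [Finset.card_insert_of_notMem (by simp [hab]), Finset.card_singleton] at this
    · intro w hw
      rw [hA, Finset.mem_filter] at hw
      refine Finset.card_pos.mpr ⟨a, ?_⟩
      rw [Finset.mem_inter, SimpleGraph.mem_neighborFinset, SimpleGraph.mem_neighborFinset]
      exact ⟨(hAM w hw.1).symm, hua⟩
  by_cases hAne : A.Nonempty
  · -- A nonempty : a is not adjacent to b, every A-vertex has a neighbor in C
    have hnab : ¬ G.Adj a b := by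
      intro hadj
      obtain ⟨x, hxa, hxn⟩ := hdom a
      apply hxn
      rcases hclass x with rfl | rfl | rfl | hxM
      · exact hua.symm
      · exact absurd rfl hxa
      · exact hadj
      · exact hAM x hxM
    have hAC : ∀ w ∈ A, ∃ z, (grestrict G M).Adj w z ∧ z ∈ C := by
      intro w hw
      rw [hA, Finset.mem_filter] at hw
      obtain ⟨hwM, hwnb⟩ := hw
      obtain ⟨hwu, hwN⟩ := hMmem w hwM
      have hwb : w ≠ b := by rintro rfl; exact hwN hbN
      rcases two_step hG hdiam hwb with hadj | ⟨z, hz1, hz2⟩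
      · exact absurd hadj.symm hwnb
      · have hzu : z ≠ u := by
          rintro rfl
          apply hwN
          rw [SimpleGraph.mem_neighborFinset]
          exact hz1.symm
        have hza : z ≠ a := by rintro rfl; exact hnab hz2
        have hzb : z ≠ b := G.ne_of_adj hz2
        have hzM : z ∈ M := by
          rw [hM, Finset.mem_sdiff, Finset.mem_erase]
          refine ⟨⟨hzu, Finset.mem_univ z⟩, ?_⟩
          rw [hN]
          simp [hza, hzb]
        refine ⟨z, grestrict_adj.mpr ⟨hz1, hwM, hzM⟩, ?_⟩
        rw [hC, Finset.mem_filter]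
        exact ⟨hzM, hz2.symm⟩
    choose fz hfz1 hfz2 using hAC
    have hAcard : A.card ≤ (grestrict G M).edgeFinset.card := by
      set g : V → Sym2 V := fun w => if hw : w ∈ A then s(w, fz w hw) else s(w, w) with hg
      apply Finset.card_le_card_of_injOn g
      · intro w hw
        rw [Finset.mem_coe] at hw ⊢
        rw [hg]; simp only [dif_pos hw]
        rw [SimpleGraph.mem_edgeFinset, SimpleGraph.mem_edgeSet]
        exact (hfz1 w hw)
      · intro w hw w' hw' heq
        rw [Finset.mem_coe] at hw hw'
        rw [hg] at heq; simp only [dif_pos hw, dif_pos hw'] at heq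
        rw [Sym2.eq_iff] at heq
        rcases heq with ⟨h1, -⟩ | ⟨h1, h2⟩
        · exact h1
        · exfalso
          have hwC : w ∈ C := by rw [h1]; exact hfz2 w' hw'
          exact (Finset.disjoint_left.mp hACdisj hw) hwC
    omega
  · rw [Finset.not_nonempty_iff_eq_empty] at hAne
    have hA0 : A.card = 0 := by rw [hAne]; rfl
    omega

/-- The main edge bound, assuming no cut vertices. -/
lemma main_bound [Fintype V] [DecidableEq V] (G : SimpleGraph V) [DecidableRel G.Adj]
    (hG : G.Connected) (hdiam : G.diam = 2)
    (hcut : ∀ v : V, (G.induce ({v}ᶜ : Set V)).Preconnected) :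
    (2 * Fintype.card V - 5 : ℤ) ≤ (G.edgeFinset.card : ℤ) := by
  classical
  haveI hnt : Nontrivial V := SimpleGraph.nontrivial_of_diam_ne_zero (by rw [hdiam]; norm_num)
  by_cases hdom : ∃ v : V, ∀ x : V, x ≠ v → G.Adj v x
  · -- dominating vertex case
    obtain ⟨v, hv⟩ := hdom
    have hnf : G.neighborFinset v = Finset.univ.erase v := by
      ext x
      rw [SimpleGraph.mem_neighborFinset, Finset.mem_erase]
      exact ⟨fun h => ⟨h.ne', Finset.mem_univ x⟩, fun h => hv x h.1⟩
    have hdegv : G.degree v = Fintype.card V - 1 := by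
      rw [SimpleGraph.degree, hnf, Finset.card_erase_of_mem (Finset.mem_univ v),
        Finset.card_univ]
    set GV := grestrict G (Finset.univ.erase v) with hGV
    have hreach : ∀ x ∈ Finset.univ.erase v, ∀ y ∈ Finset.univ.erase v, GV.Reachable x y := by
      intro x hx y hy
      rw [Finset.mem_erase] at hx hy
      have hx' : x ∈ ({v}ᶜ : Set V) := Set.mem_compl_singleton_iff.mpr hx.1
      have hy' : y ∈ ({v}ᶜ : Set V) := Set.mem_compl_singleton_iff.mpr hy.1
      have hmap : ∀ p q : ({v}ᶜ : Set V), (G.induce ({v}ᶜ : Set V)).Adj p q →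
          GV.Adj p.val q.val := by
        rintro ⟨p, hp⟩ ⟨q, hq⟩ hadj
        refine ⟨by simpa using hadj, ?_, ?_⟩
        · rw [Finset.mem_erase]
          exact ⟨Set.mem_compl_singleton_iff.mp hp, Finset.mem_univ _⟩
        · rw [Finset.mem_erase]
          exact ⟨Set.mem_compl_singleton_iff.mp hq, Finset.mem_univ _⟩
      let φ : (G.induce ({v}ᶜ : Set V)) →g GV :=
        ⟨Subtype.val, fun {p q} h => hmap p q h⟩
      exact SimpleGraph.Reachable.map φ (hcut v ⟨x, hx'⟩ ⟨y, hy'⟩)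
    have hcb := comp_bound GV (Finset.univ.erase v) hreach
    have hdisj : Disjoint (G.incidenceFinset v) GV.edgeFinset := by
      rw [Finset.disjoint_left]
      intro e he he'
      rw [SimpleGraph.mem_incidenceFinset] at he
      have h2 := grestrict_edge_mem he' v he.2
      rw [Finset.mem_erase] at h2
      exact h2.1 rfl
    have hsub : G.incidenceFinset v ∪ GV.edgeFinset ⊆ G.edgeFinset := by
      apply Finset.union_subset
      · intro e he
        rw [SimpleGraph.mem_incidenceFinset] at he
        rw [SimpleGraph.mem_edgeFinset]
        exact he.1
      · exact SimpleGraph.edgeFinset_mono (grestrict_le G _)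
    have hcard := Finset.card_le_card hsub
    rw [Finset.card_union_of_disjoint hdisj] at hcard
    have hic : (G.incidenceFinset v).card = G.degree v := G.card_incidenceFinset_eq_degree v
    have herase : (Finset.univ.erase v).card = Fintype.card V - 1 := by
      rw [Finset.card_erase_of_mem (Finset.mem_univ v), Finset.card_univ]
    have hn1 : 1 ≤ Fintype.card V := Fintype.card_pos
    omega
  · -- no dominating vertex
    push_neg at hdom
    have hnev : Nonempty V := inferInstance
    obtain ⟨x0⟩ := hnev
    obtain ⟨u, -, hmin⟩ := Finset.exists_min_image (Finset.univ : Finset V) (fun x => G.degree x)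
      ⟨x0, Finset.mem_univ x0⟩
    have hdeg : ∀ x : V, G.degree u ≤ G.degree x := fun x => hmin x (Finset.mem_univ x)
    have hh := G.sum_degrees_eq_twice_card_edges
    by_cases h4 : 4 ≤ G.degree u
    · have hle := Finset.card_nsmul_le_sum Finset.univ (fun x => G.degree x) 4
        (fun x _ => le_trans h4 (hdeg x))
      rw [Finset.card_univ, smul_eq_mul] at hle
      omega
    set M := Finset.univ.erase u \ G.neighborFinset u with hM
    have hMmem : ∀ w ∈ M, w ≠ u ∧ w ∉ G.neighborFinset u := by
      intro w hw
      rw [hM, Finset.mem_sdiff, Finset.mem_erase] at hw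
      exact ⟨hw.1.1, hw.2⟩
    have hMadj : ∀ w ∈ M, ∃ z ∈ G.neighborFinset u, G.Adj z w := by
      intro w hw
      obtain ⟨hwu, hwN⟩ := hMmem w hw
      rcases two_step hG hdiam (Ne.symm hwu) with hadj | ⟨z, hz1, hz2⟩
      · exfalso; apply hwN; rwa [SimpleGraph.mem_neighborFinset]
      · exact ⟨z, by rwa [SimpleGraph.mem_neighborFinset], hz2⟩
    have hNsub : G.neighborFinset u ⊆ Finset.univ.erase u := by
      intro x hx
      rw [SimpleGraph.mem_neighborFinset] at hx
      rw [Finset.mem_erase]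
      exact ⟨hx.ne', Finset.mem_univ x⟩
    have hcardM : Fintype.card V - 1 = G.degree u + M.card := by
      have h1 : M.card = (Finset.univ.erase u).card - (G.neighborFinset u).card := by
        rw [hM, Finset.card_sdiff_of_subset hNsub]
      have h2 : (Finset.univ.erase u).card = Fintype.card V - 1 := by
        rw [Finset.card_erase_of_mem (Finset.mem_univ u), Finset.card_univ]
      have h3 := Finset.card_le_card hNsub
      have h4 : (G.neighborFinset u).card = G.degree u := rfl
      omega
    have hδ : G.degree u = 0 ∨ G.degree u = 1 ∨ G.degree u = 2 ∨ G.degree u = 3 := by omega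
    rcases hδ with h0 | h1 | h2 | h3
    · -- minimum degree 0 : impossible
      exfalso
      obtain ⟨x, hx⟩ := exists_ne u
      have hN0 : G.neighborFinset u = ∅ := Finset.card_eq_zero.mp h0
      rcases two_step hG hdiam (Ne.symm hx) with hadj | ⟨z, hz1, hz2⟩
      · have : x ∈ G.neighborFinset u := by rwa [SimpleGraph.mem_neighborFinset]
        rw [hN0] at this
        exact absurd this (Finset.notMem_empty x)
      · have : z ∈ G.neighborFinset u := by rwa [SimpleGraph.mem_neighborFinset]
        rw [hN0] at this
        exact absurd this (Finset.notMem_empty z)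
    · -- minimum degree 1 : forces a dominating vertex, contradiction
      exfalso
      obtain ⟨a, hNa⟩ := Finset.card_eq_one.mp h1
      obtain ⟨x, hxa, hxn⟩ := hdom a
      apply hxn
      have hua : G.Adj u a := by
        have : a ∈ G.neighborFinset u := by rw [hNa]; simp
        rwa [SimpleGraph.mem_neighborFinset] at this
      by_cases hxu : x = u
      · subst hxu; exact hua.symm
      · rcases two_step hG hdiam (Ne.symm hxu) with hadj | ⟨z, hz1, hz2⟩
        · exfalso
          have : x ∈ G.neighborFinset u := by rwa [SimpleGraph.mem_neighborFinset]
          rw [hNa, Finset.mem_singleton] at this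
          exact hxa this
        · have : z ∈ G.neighborFinset u := by rwa [SimpleGraph.mem_neighborFinset]
          rw [hNa, Finset.mem_singleton] at this
          subst this
          exact hz2
    · -- minimum degree 2
      obtain ⟨a, b, hab, hN2⟩ := Finset.card_eq_two.mp h2
      set A := M.filter (fun w => G.Adj a w ∧ ¬ G.Adj b w) with hA
      set B := M.filter (fun w => G.Adj b w ∧ ¬ G.Adj a w) with hB
      set C := M.filter (fun w => G.Adj a w ∧ G.Adj b w) with hC
      by_cases hBne : B.Nonempty
      · by_cases hAne : A.Nonempty
        · -- both nonempty : the component argument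
          have haN : a ∈ G.neighborFinset u := by rw [hN2]; simp
          have hbN : b ∈ G.neighborFinset u := by rw [hN2]; simp
          have hua : G.Adj u a := by rwa [SimpleGraph.mem_neighborFinset] at haN
          have hub : G.Adj u b := by rwa [SimpleGraph.mem_neighborFinset] at hbN
          have hMsplit : (A ∪ B) ∪ C = M := by
            apply Finset.Subset.antisymm
            · intro w hw
              rw [Finset.mem_union, Finset.mem_union] at hw
              rcases hw with (hw | hw) | hw
              · rw [hA, Finset.mem_filter] at hw; exact hw.1
              · rw [hB, Finset.mem_filter] at hw; exact hw.1
              · rw [hC, Finset.mem_filter] at hw; exact hw.1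
            · intro w hw
              obtain ⟨z, hzN, hzw⟩ := hMadj w hw
              rw [hN2] at hzN
              simp only [Finset.mem_insert, Finset.mem_singleton] at hzN
              simp only [Finset.mem_union, hA, hB, hC, Finset.mem_filter]
              rcases hzN with rfl | rfl
              · by_cases hbw : G.Adj b w
                · exact Or.inr ⟨hw, hzw, hbw⟩
                · exact Or.inl (Or.inl ⟨hw, hzw, hbw⟩)
              · by_cases haw : G.Adj a w
                · exact Or.inr ⟨hw, haw, hzw⟩
                · exact Or.inl (Or.inr ⟨hw, hzw, haw⟩)
          have hABdisj : Disjoint A B := by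
            rw [hA, hB, Finset.disjoint_left]
            intro w hw hw'
            rw [Finset.mem_filter] at hw hw'
            exact hw'.2.2 hw.2.1
          have hABCdisj : Disjoint (A ∪ B) C := by
            rw [Finset.disjoint_left]
            intro w hw hw'
            rw [Finset.mem_union] at hw
            rw [hC, Finset.mem_filter] at hw'
            rcases hw with hw | hw
            · rw [hA, Finset.mem_filter] at hw
              exact hw.2.2 hw'.2.2
            · rw [hB, Finset.mem_filter] at hw
              exact hw.2.2 hw'.2.1
          -- reachability inside M between A and B
          have hGMadj : ∀ w ∈ A, ∀ x ∈ B, (grestrict G M).Reachable w x := by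
            intro w hw x hx
            rw [hA, Finset.mem_filter] at hw
            rw [hB, Finset.mem_filter] at hx
            have hwx : w ≠ x := by
              rintro rfl
              exact hw.2.2 hx.2.1
            rcases two_step hG hdiam hwx with hadj | ⟨z, hz1, hz2⟩
            · exact (grestrict_adj.mpr ⟨hadj, hw.1, hx.1⟩).reachable
            · have hzu : z ≠ u := by
                rintro rfl
                exact (hMmem w hw.1).2 (by rw [SimpleGraph.mem_neighborFinset]; exact hz1.symm)
              have hza : z ≠ a := by rintro rfl; exact hx.2.2 hz2
              have hzb : z ≠ b := by rintro rfl; exact hw.2.2 hz1.symm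
              have hzM : z ∈ M := by
                rw [hM, Finset.mem_sdiff, Finset.mem_erase]
                refine ⟨⟨hzu, Finset.mem_univ z⟩, ?_⟩
                rw [hN2]
                simp [hza, hzb]
              exact ((grestrict_adj.mpr ⟨hz1, hw.1, hzM⟩).reachable).trans
                ((grestrict_adj.mpr ⟨hz2, hzM, hx.1⟩).reachable)
          obtain ⟨w0, hw0⟩ := hAne
          obtain ⟨x0, hx0⟩ := hBne
          have hT : ∀ p ∈ A ∪ B, ∀ q ∈ A ∪ B, (grestrict G M).Reachable p q := by
            intro p hp q hq
            rw [Finset.mem_union] at hp hq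
            rcases hp with hp | hp <;> rcases hq with hq | hq
            · exact (hGMadj p hp x0 hx0).trans (hGMadj q hq x0 hx0).symm
            · exact hGMadj p hp q hq
            · exact (hGMadj q hq p hp).symm
            · exact ((hGMadj w0 hw0 p hp).symm).trans (hGMadj w0 hw0 q hq)
          have hcb := comp_bound (grestrict G M) (A ∪ B) hT
          rw [Finset.card_union_of_disjoint hABdisj] at hcb
          have hbc := base_count G u
          rw [← hM, h2] at hbc
          have hcardABC : A.card + B.card + C.card = M.card := by
            rw [← hMsplit, Finset.card_union_of_disjoint hABCdisj,
              Finset.card_union_of_disjoint hABdisj]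
          have hTbound : A.card * 1 + B.card * 1 + C.card * 2 ≤
              ∑ w ∈ M, (G.neighborFinset w ∩ G.neighborFinset u).card := by
            rw [← hMsplit, Finset.sum_union hABCdisj, Finset.sum_union hABdisj]
            have hTA := Finset.card_nsmul_le_sum A
              (fun w => (G.neighborFinset w ∩ G.neighborFinset u).card) 1 ?_
            · have hTB := Finset.card_nsmul_le_sum B
                (fun w => (G.neighborFinset w ∩ G.neighborFinset u).card) 1 ?_
              · have hTC := Finset.card_nsmul_le_sum C
                  (fun w => (G.neighborFinset w ∩ G.neighborFinset u).card) 2 ?_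
                · simp only [smul_eq_mul] at hTA hTB hTC
                  omega
                · intro w hw
                  rw [hC, Finset.mem_filter] at hw
                  have hsub : ({a, b} : Finset V) ⊆
                      G.neighborFinset w ∩ G.neighborFinset u := by
                    intro x hx
                    simp only [Finset.mem_insert, Finset.mem_singleton] at hx
                    rw [Finset.mem_inter, SimpleGraph.mem_neighborFinset,
                      SimpleGraph.mem_neighborFinset]
                    rcases hx with rfl | rfl
                    · exact ⟨hw.2.1.symm, hua⟩
                    · exact ⟨hw.2.2.symm, hub⟩
                  have := Finset.card_le_card hsub
                  rwa [Finset.card_insert_of_notMem (by simp [hab]),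
                    Finset.card_singleton] at this
              · intro w hw
                rw [hB, Finset.mem_filter] at hw
                refine Finset.card_pos.mpr ⟨b, ?_⟩
                rw [Finset.mem_inter, SimpleGraph.mem_neighborFinset,
                  SimpleGraph.mem_neighborFinset]
                exact ⟨hw.2.1.symm, hub⟩
            · intro w hw
              rw [hA, Finset.mem_filter] at hw
              refine Finset.card_pos.mpr ⟨a, ?_⟩
              rw [Finset.mem_inter, SimpleGraph.mem_neighborFinset,
                SimpleGraph.mem_neighborFinset]
              exact ⟨hw.2.1.symm, hua⟩
          omega
        · -- A empty : apply delta2_empty with roles of a and b swapped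
          rw [Finset.not_nonempty_iff_eq_empty] at hAne
          apply delta2_empty G hG hdiam hdom u b a hab.symm
            (by rw [hN2, Finset.pair_comm])
          rw [← hM, ← hA]
          exact hAne
      · -- B empty
        rw [Finset.not_nonempty_iff_eq_empty] at hBne
        apply delta2_empty G hG hdiam hdom u a b hab hN2
        rw [← hM, ← hB]
        exact hBne
    · -- minimum degree 3
      have hbc := base_count G u
      rw [← hM, h3] at hbc
      have hsplit : ∀ w ∈ M, G.degree w =
          (G.neighborFinset w ∩ G.neighborFinset u).card +
          (G.neighborFinset w ∩ M).card := by
        intro w hw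
        obtain ⟨hwu, hwN⟩ := hMmem w hw
        have hcover : G.neighborFinset w =
            (G.neighborFinset w ∩ G.neighborFinset u) ∪ (G.neighborFinset w ∩ M) := by
          rw [← Finset.inter_union_distrib_left]
          symm
          rw [Finset.inter_eq_left]
          intro x hx
          have hxw : G.Adj w x := by rwa [SimpleGraph.mem_neighborFinset] at hx
          have hxu : x ≠ u := by
            rintro rfl
            apply hwN
            rw [SimpleGraph.mem_neighborFinset]
            exact hxw.symm
          rw [Finset.mem_union]
          by_cases hxN : x ∈ G.neighborFinset u
          · exact Or.inl hxN
          · refine Or.inr ?_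
            rw [hM, Finset.mem_sdiff, Finset.mem_erase]
            exact ⟨⟨hxu, Finset.mem_univ x⟩, hxN⟩
        have hdisj2 : Disjoint (G.neighborFinset w ∩ G.neighborFinset u)
            (G.neighborFinset w ∩ M) := by
          apply Finset.disjoint_of_subset_left Finset.inter_subset_right
          apply Finset.disjoint_of_subset_right Finset.inter_subset_right
          rw [hM]
          exact Finset.disjoint_sdiff
        have hcard2 := Finset.card_union_of_disjoint hdisj2
        rw [← hcover] at hcard2
        rw [SimpleGraph.degree, hcard2]
      have hdsum : ∑ w ∈ M, G.degree w =
          (∑ w ∈ M, (G.neighborFinset w ∩ G.neighborFinset u).card) +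
          2 * (grestrict G M).edgeFinset.card := by
        rw [Finset.sum_congr rfl hsplit, Finset.sum_add_distrib, sum_deg_restrict]
      have h3m := Finset.card_nsmul_le_sum M (fun x => G.degree x) 3
        (fun x _ => by rw [← h3]; exact hdeg x)
      rw [smul_eq_mul] at h3m
      have hT1 := Finset.card_nsmul_le_sum M
        (fun w => (G.neighborFinset w ∩ G.neighborFinset u).card) 1 ?_
      · rw [smul_eq_mul] at hT1
        omega
      · intro w hw
        obtain ⟨z, hzN, hzw⟩ := hMadj w hw
        refine Finset.card_pos.mpr ⟨z, ?_⟩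
        rw [Finset.mem_inter, SimpleGraph.mem_neighborFinset]
        exact ⟨hzw.symm, hzN⟩


variable [Fintype V] [DecidableEq V]

lemma cut_not_class0 (G : SimpleGraph V) (v : V) (hv : IsCutVertex G v) : ¬ Class0 G := by
  rw [IsCutVertex, SimpleGraph.Preconnected] at hv
  push_neg at hv
  obtain ⟨a, b, hnr⟩ := hv
  set A : Set V := {x | ∃ h : x ∈ ({v}ᶜ : Set V), (G.induce ({v}ᶜ : Set V)).Reachable a ⟨x, h⟩}
    with hA
  set r : V := (a : V) with hr
  set w : V := (b : V) with hw
  have hrv : r ≠ v := a.2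
  have hwv : w ≠ v := b.2
  have hrA : r ∈ A := ⟨a.2, by rw [Subtype.eta]⟩
  have hwA : w ∉ A := by
    rintro ⟨h, hreach⟩
    exact hnr (by rwa [Subtype.eta] at hreach)
  have hvA : v ∉ A := by rintro ⟨h, -⟩; exact h rfl
  have hrw : r ≠ w := fun h => hwA (h ▸ hrA)
  -- F1 : edges from A stay in A ∪ {v}
  have F1 : ∀ x ∈ A, ∀ y, G.Adj x y → y = v ∨ y ∈ A := by
    rintro x ⟨hx, hreach⟩ y hadj
    by_cases hyv : y = v
    · exact Or.inl hyv
    · refine Or.inr ⟨hyv, hreach.trans (Adj.reachable ?_)⟩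
      simpa using hadj
  -- the configuration
  set p0 : V → ℕ := fun x => (if x = w then 2 else 0) + (if x = v ∨ x = r then 0 else 1)
    with hp0
  have hcard2 : ({v, r} : Finset V).card = 2 := by
    rw [Finset.card_insert_of_notMem (by simp [Ne.symm hrv]), Finset.card_singleton]
  have hsum : (∑ x, p0 x) = Fintype.card V := by
    rw [hp0]
    rw [Finset.sum_add_distrib]
    have h1 : (∑ x, if x = w then 2 else 0) = 2 := by
      rw [Finset.sum_ite_eq' Finset.univ w (fun _ => 2)]
      simp
    have h2 : (∑ x : V, if x = v ∨ x = r then 0 else 1) =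
        Fintype.card V - 2 := by
      classical
      have hiff : ∀ x : V, (x = v ∨ x = r) ↔ x ∈ ({v, r} : Finset V) := by
        intro x; simp
      calc (∑ x : V, if x = v ∨ x = r then 0 else 1)
          = ∑ x : V, (if x ∈ ({v, r} : Finset V) then 0 else 1) := by
            apply Finset.sum_congr rfl; intro x _; rw [if_congr (hiff x) rfl rfl]
        _ = (Finset.univ.filter (fun x => ¬ x ∈ ({v, r} : Finset V))).card := by
            rw [Finset.sum_ite, Finset.sum_const, Finset.sum_const]; simp
        _ = Fintype.card V - 2 := by
            rw [Finset.filter_not, Finset.card_sdiff_of_subset (Finset.filter_subset _ _),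
              Finset.filter_mem_eq_inter, Finset.univ_inter, hcard2, Finset.card_univ]
    rw [h1, h2]
    have : 2 ≤ Fintype.card V := by
      have h3 : ({v, r} : Finset V).card ≤ Fintype.card V := by
        rw [← Finset.card_univ]; exact Finset.card_le_card (Finset.subset_univ _)
      omega
    omega
  -- the invariant
  set Inv : (V → ℕ) → Prop := fun p =>
    p r = 0 ∧ (∀ x ∈ A, x ≠ r → p x = 1) ∧ p v ≤ 1 ∧ (p v = 1 → ∀ x, p x ≤ 1) ∧
      (∀ x, 2 ≤ p x → (∀ y, 2 ≤ p y → y = x) ∧ p x ≤ 3) with hInv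
  have hInv0 : Inv p0 := by
    rw [hInv]
    have hvw : v ≠ w := Ne.symm hwv
    refine ⟨by simp [hp0, hrw], ?_, by simp [hp0, hvw], by simp [hp0, hvw], ?_⟩
    · intro x hx hxr
      have hxv : x ≠ v := fun h => hvA (h ▸ hx)
      have hxw : x ≠ w := fun h => hwA (h ▸ hx)
      simp [hp0, hxv, hxr, hxw]
    · intro x hx
      have hxw : x = w := by
        by_contra hne
        simp only [hp0, if_neg hne] at hx
        split at hx <;> omega
      subst hxw
      constructor
      · intro y hy
        by_contra hne
        simp only [hp0, if_neg hne] at hy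
        split at hy <;> omega
      · simp [hp0]; split <;> omega
  have hstep : ∀ p q, Inv p → PebblingMove G p q → Inv q := by
    rintro p q hI ⟨u, z, hadj, h2, hqu, hqz, hoth⟩
    rw [hInv] at hI
    obtain ⟨I1, I2, I3, I4, I5⟩ := hI
    have huz : u ≠ z := G.ne_of_adj hadj
    have hur : u ≠ r := fun h => by rw [h, I1] at h2; omega
    have huv : u ≠ v := fun h => by rw [h] at h2; omega
    have huA : u ∉ A := fun h => by
      have := I2 u h hur; omega
    have hzr : z ≠ r := by
      intro h
      rcases F1 r hrA u (h ▸ hadj.symm) with h' | h'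
      · exact huv h'
      · exact huA h'
    have hzA : z ∉ A := by
      intro h
      rcases F1 z h u hadj.symm with h' | h'
      · exact huv h'
      · exact huA h'
    have hu3 : p u ≤ 3 := (I5 u h2).2
    have huniq : ∀ y, 2 ≤ p y → y = u := (I5 u h2).1
    rw [hInv]
    have hpz1 : p z ≤ 1 := by
      by_contra hc
      exact huz.symm (huniq z (by omega))
    refine ⟨?_, ?_, ?_, ?_, ?_⟩
    · rw [hoth r hur.symm (Ne.symm hzr)]; exact I1
    · intro x hx hxr
      rw [hoth x (fun h => huA (h ▸ hx)) (fun h => hzA (h ▸ hx))]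
      exact I2 x hx hxr
    · by_cases hzv : z = v
      · subst hzv
        have : p z = 0 := by
          by_contra hc
          have h1 : p z = 1 := by omega
          have := I4 h1 u
          omega
        omega
      · rw [hoth v (Ne.symm huv) (Ne.symm hzv)]; exact I3
    · intro hqv1 x
      by_cases hzv : z = v
      · subst hzv
        by_cases hxu : x = u
        · subst hxu; omega
        · by_cases hxz : x = z
          · subst hxz; omega
          · rw [hoth x hxu hxz]
            by_contra hc
            exact hxu (huniq x (by omega))
      · exfalso
        rw [hoth v (Ne.symm huv) (Ne.symm hzv)] at hqv1
        have := I4 hqv1 u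
        omega
    · intro x hx
      have hxz : x = z := by
        by_cases hxu : x = u
        · subst hxu; omega
        · by_contra hxz
          rw [hoth x hxu hxz] at hx
          exact hxu (huniq x hx)
      subst hxz
      refine ⟨?_, by omega⟩
      intro y hy
      by_cases hyu : y = u
      · subst hyu; omega
      · by_contra hyz
        rw [hoth y hyu hyz] at hy
        exact hyu (huniq y hy)
  have hrtg : ∀ q, Relation.ReflTransGen (PebblingMove G) p0 q → Inv q := by
    intro q hq
    induction hq with
    | refl => exact hInv0
    | tail _ hmv ih => exact hstep _ _ ih hmv
  have hunsolv : ¬ PebblingSolvable G r p0 := by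
    rintro ⟨q, hq, hq1⟩
    have := (hrtg q hq).1
    omega
  -- conclude
  intro hc0
  rw [Class0, pebblingNumber] at hc0
  set S := {k : ℕ | ∀ (r : V) (p : V → ℕ), (∑ v, p v) = k → PebblingSolvable G r p} with hS
  have hnS : Fintype.card V ∉ S := fun h => hunsolv (h r p0 hsum)
  by_cases hne : S.Nonempty
  · have := Nat.sInf_mem hne
    rw [hc0] at this
    exact hnS this
  · rw [Set.not_nonempty_iff_eq_empty] at hne
    rw [hne, Nat.sInf_empty] at hc0
    have : IsEmpty V := Fintype.card_eq_zero_iff.mp hc0.symm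
    exact this.elim v


end Aux

/-- Every connected `n`-vertex graph of diameter 2 with no cut-vertex has at least
`2n - 5` edges; in particular every `n`-vertex Class 0 graph of diameter 2 has at
least `2n - 5` edges. -/
theorem diam_two_edge_bound {V : Type*} [Fintype V] [DecidableEq V]
    (G : SimpleGraph V) [DecidableRel G.Adj] (hG : G.Connected) (hdiam : G.diam = 2) :
    ((∀ v : V, ¬ IsCutVertex G v) →
      (2 * Fintype.card V - 5 : ℤ) ≤ (G.edgeFinset.card : ℤ)) ∧
    (Class0 G → (2 * Fintype.card V - 5 : ℤ) ≤ (G.edgeFinset.card : ℤ)) := by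
  constructor
  · intro hcut
    exact main_bound G hG hdiam (fun v => not_not.mp (hcut v))
  · intro hc0
    apply main_bound G hG hdiam
    intro v
    by_contra hv
    exact cut_not_class0 G v hv hc0
end

section
/- Let G be a finite connected simple Class 0 graph with minimum degree 3 and let r be a vertex of degree 3 such that at most 7 vertices of G are at distance exactly 2 from r. Then every vertex at distance at least 4 from r has degree at least 4. -/
/-- Weight of `k` pebbles on a vertex of class `c`.
Classes: 0 = root, 1 = distance 1, 2 = distance 2, 3 = far vertices (distance ≥ 3,
not near `v`), 4 = neighbors of the far vertex `v`, 5 = the far vertex `v` itself. -/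
def pebW : ℕ → ℕ → ℕ := fun c k =>
  if c = 0 then 16 * k else if c = 1 then 8 * k else if c = 2 then 4 * k
  else if c = 3 then 4 * (k - 1) else if c = 4 then 2 * k else k

lemma pebW_zero (c : ℕ) : pebW c 0 = 0 := by
  unfold pebW; split_ifs <;> rfl

/-- The key arithmetic inequality: along any admissible adjacency of classes, a
pebbling move does not increase total weight. -/
lemma pebW_pair (cu cw a b : ℕ) (hu : cu ≤ 5) (hw : cw ≤ 5) (ha : 2 ≤ a)
    (F1 : cu = 5 → cw = 4) (F2 : cu = 4 → 2 ≤ cw) (F3 : cu = 3 → 2 ≤ cw)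
    (F4 : cu = 2 → 1 ≤ cw) :
    pebW cu (a - 2) + pebW cw (b + 1) ≤ pebW cu a + pebW cw b := by
  interval_cases cu <;> interval_cases cw <;> simp_all [pebW] <;> omega

/-- Total weight is non-increasing along sequences of pebbling moves. -/
lemma peb_move_le {V : Type*} [Fintype V] [DecidableEq V] (G : SimpleGraph V)
    (φ : V → ℕ → ℕ)
    (hpair : ∀ u w : V, G.Adj u w → ∀ a b : ℕ, 2 ≤ a →
      φ u (a - 2) + φ w (b + 1) ≤ φ u a + φ w b)
    {p q : V → ℕ} (h : Relation.ReflTransGen (PebblingMove G) p q) :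
    ∑ x, φ x (q x) ≤ ∑ x, φ x (p x) := by
  induction h with
  | refl => exact le_rfl
  | tail _ hstep ih =>
    rename_i p' q' _
    refine le_trans ?_ ih
    obtain ⟨u, w, hadj, hu2, hqu, hqw, hoth⟩ := hstep
    have huw : u ≠ w := G.ne_of_adj hadj
    have key : ∀ f : V → ℕ,
        ∑ x, f x = (∑ x ∈ Finset.univ \ {u, w}, f x) + (f u + f w) := by
      intro f
      rw [← Finset.sum_sdiff (Finset.subset_univ {u, w}), Finset.sum_pair huw]
    rw [key (fun x => φ x (q' x)), key (fun x => φ x (p' x))]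
    have hoff : ∑ x ∈ Finset.univ \ {u, w}, φ x (q' x)
        = ∑ x ∈ Finset.univ \ {u, w}, φ x (p' x) := by
      refine Finset.sum_congr rfl fun x hx => ?_
      simp only [Finset.mem_sdiff, Finset.mem_insert, Finset.mem_singleton] at hx
      rw [hoth x (fun h => hx.2 (Or.inl h)) (fun h => hx.2 (Or.inr h))]
    rw [hoff]
    refine Nat.add_le_add_left ?_ _
    rw [hqu, hqw]
    exact hpair u w hadj (p' u) (p' w) hu2

set_option maxHeartbeats 1000000 in
/-- In a Class 0 graph of minimum degree exactly 3, if `r` is a vertex of degree 3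
with at most 7 vertices at distance exactly 2 from it, then every vertex at distance
at least 4 from `r` has degree at least 4. -/
theorem degree_four_of_far_from_root {V : Type*} [Fintype V] [DecidableEq V]
    (G : SimpleGraph V) [DecidableRel G.Adj] (hG : G.Connected) (hG0 : Class0 G)
    (hmin : ∀ v : V, 3 ≤ G.degree v) (r : V) (hr : G.degree r = 3)
    (hN2 : {v : V | G.dist r v = 2}.ncard ≤ 7) :
    ∀ v : V, 4 ≤ G.dist r v → 4 ≤ G.degree v := by
  intro v hdv
  by_contra hcon
  push_neg at hcon
  have hdeg3 : G.degree v = 3 := le_antisymm (by omega) (hmin v)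
  -- basic distance facts
  have hadjd : ∀ a b : V, G.Adj a b → G.dist r b ≤ G.dist r a + 1 := by
    intro a b hab
    have h1 : G.dist r b ≤ G.dist r a + G.dist a b := hG.dist_triangle
    have h2 : G.dist a b = 1 := SimpleGraph.dist_eq_one_iff_adj.2 hab
    omega
  have hdr : G.dist r r = 0 := SimpleGraph.dist_self
  have hrv : r ≠ v := by
    intro h; rw [← h] at hdv; omega
  have hadjv : ∀ x : V, G.Adj v x → 3 ≤ G.dist r x := by
    intro x hx
    have := hadjd x v hx.symm
    omega
  -- the classification of vertices
  set cls : V → ℕ := fun x =>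
    if x = v then 5 else if G.Adj v x then 4
    else if 3 ≤ G.dist r x then 3 else G.dist r x with hcls
  have hclsle : ∀ x, cls x ≤ 5 := by
    intro x; simp only [hcls]; split_ifs with h1 h2 h3 <;> omega
  have hcls5 : ∀ x, cls x = 5 ↔ x = v := by
    intro x; simp only [hcls]; split_ifs with h1 h2 h3 <;> simp_all <;> omega
  have hcls4 : ∀ x, cls x = 4 ↔ G.Adj v x := by
    intro x; simp only [hcls]
    split_ifs with h1 h2 h3 <;>
      simp_all [SimpleGraph.irrefl] <;> omega
  have hcls0 : ∀ x, cls x = 0 ↔ x = r := by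
    intro x
    constructor
    · intro h
      simp only [hcls] at h
      split_ifs at h with h1 h2 h3 <;> try omega
      exact ((hG.dist_eq_zero_iff).1 h).symm
    · intro h
      subst h
      have h1 : x ≠ v := hrv
      have h2 : ¬ G.Adj v x := fun h => by have := hadjv x h; omega
      simp only [hcls]
      rw [if_neg h1, if_neg h2, if_neg (by omega), hdr]
  have hcls1 : ∀ x, cls x = 1 ↔ G.Adj r x := by
    intro x
    constructor
    · intro h
      simp only [hcls] at h
      split_ifs at h with h1 h2 h3 <;> try omega
      exact SimpleGraph.dist_eq_one_iff_adj.1 h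
    · intro h
      have hd1 : G.dist r x = 1 := SimpleGraph.dist_eq_one_iff_adj.2 h
      have h1 : x ≠ v := by intro h'; rw [h'] at hd1; omega
      have h2 : ¬ G.Adj v x := fun h' => by have := hadjv x h'; omega
      simp only [hcls]
      rw [if_neg h1, if_neg h2, if_neg (by omega), hd1]
  have hcls2 : ∀ x, cls x = 2 ↔ G.dist r x = 2 := by
    intro x
    constructor
    · intro h
      simp only [hcls] at h
      split_ifs at h with h1 h2 h3 <;> omega
    · intro hd2
      have h1 : x ≠ v := by intro h'; rw [h'] at hd2; omega
      have h2 : ¬ G.Adj v x := fun h' => by have := hadjv x h'; omega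
      simp only [hcls]
      rw [if_neg h1, if_neg h2, if_neg (by omega), hd2]
  have hcls3d : ∀ x, cls x = 3 → 3 ≤ G.dist r x := by
    intro x h
    simp only [hcls] at h
    split_ifs at h with h1 h2 h3 <;> omega
  have hge1 : ∀ x, 1 ≤ G.dist r x → 1 ≤ cls x := by
    intro x hx; simp only [hcls]; split_ifs <;> omega
  have hge2 : ∀ x, 2 ≤ G.dist r x → 2 ≤ cls x := by
    intro x hx; simp only [hcls]; split_ifs <;> omega
  -- the pairwise weight inequality for adjacent vertices
  have hpair : ∀ u w : V, G.Adj u w → ∀ a b : ℕ, 2 ≤ a →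
      pebW (cls u) (a - 2) + pebW (cls w) (b + 1)
        ≤ pebW (cls u) a + pebW (cls w) b := by
    intro u w hadj a b ha
    have F1 : cls u = 5 → cls w = 4 := by
      intro h
      have huv : u = v := (hcls5 u).1 h
      exact (hcls4 w).2 (huv ▸ hadj)
    have F2 : cls u = 4 → 2 ≤ cls w := by
      intro h
      have h3u : 3 ≤ G.dist r u := hadjv u ((hcls4 u).1 h)
      have := hadjd w u hadj.symm
      exact hge2 w (by omega)
    have F3 : cls u = 3 → 2 ≤ cls w := by
      intro h
      have h3u := hcls3d u h
      have := hadjd w u hadj.symm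
      exact hge2 w (by omega)
    have F4 : cls u = 2 → 1 ≤ cls w := by
      intro h
      have h2u := (hcls2 u).1 h
      have := hadjd w u hadj.symm
      exact hge1 w (by omega)
    exact pebW_pair (cls u) (cls w) a b (hclsle u) (hclsle w) ha F1 F2 F3 F4
  -- counting the classes
  set n := Fintype.card V with hn
  set c := (Finset.univ.filter (fun x => G.dist r x = 2)).card with hcdef
  have hc7 : c ≤ 7 := by
    have hconv : {v : V | G.dist r v = 2}.ncard = c := by
      rw [Set.ncard_eq_toFinset_card', Set.toFinset_setOf]
    omega
  have h5set : Finset.univ.filter (fun x => cls x = 5) = {v} := by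
    ext x; simp [hcls5 x]
  have h5card : (Finset.univ.filter (fun x => cls x = 5)).card = 1 := by
    rw [h5set]; rfl
  have h4card : (Finset.univ.filter (fun x => cls x = 4)).card = 3 := by
    have : Finset.univ.filter (fun x => cls x = 4) = G.neighborFinset v := by
      ext x; simp [hcls4 x, SimpleGraph.mem_neighborFinset]
    rw [this, G.card_neighborFinset_eq_degree, hdeg3]
  have h0card : (Finset.univ.filter (fun x => cls x = 0)).card = 1 := by
    have : Finset.univ.filter (fun x => cls x = 0) = {r} := by
      ext x; simp [hcls0 x]
    rw [this]; rfl
  have h1card : (Finset.univ.filter (fun x => cls x = 1)).card = 3 := by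
    have : Finset.univ.filter (fun x => cls x = 1) = G.neighborFinset r := by
      ext x; simp [hcls1 x, SimpleGraph.mem_neighborFinset]
    rw [this, G.card_neighborFinset_eq_degree, hr]
  have h2card : (Finset.univ.filter (fun x => cls x = 2)).card = c := by
    rw [hcdef]
    congr 1
    ext x; simp [hcls2 x]
  have htot : ∑ j ∈ Finset.range 6,
      (Finset.univ.filter (fun x => cls x = j)).card = n := by
    rw [hn]
    exact (Finset.card_eq_sum_card_fiberwise
      (fun x _ => Finset.mem_range.2 (by have := hclsle x; omega))).symm
  rw [Finset.sum_range_succ, Finset.sum_range_succ, Finset.sum_range_succ,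
    Finset.sum_range_succ, Finset.sum_range_succ, Finset.sum_range_one,
    h0card, h1card, h2card, h4card, h5card] at htot
  -- the unsolvable configuration
  set m := 8 + c with hm
  set p₀ : V → ℕ := fun x => if cls x = 5 then m else if cls x = 3 then 1 else 0
    with hp₀
  have hsize : ∑ x, p₀ x = n := by
    have hpt : ∀ x, p₀ x
        = (if cls x = 5 then m else 0) + (if cls x = 3 then 1 else 0) := by
      intro x
      simp only [hp₀]
      by_cases h5 : cls x = 5 <;> by_cases h3 : cls x = 3 <;> simp [h5, h3]
    rw [Finset.sum_congr rfl (fun x _ => hpt x), Finset.sum_add_distrib,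
      ← Finset.sum_filter, ← Finset.sum_filter, h5set, Finset.sum_singleton,
      Finset.sum_const, smul_eq_mul, mul_one]
    omega
  have hpot : ∑ x, pebW (cls x) (p₀ x) = m := by
    have hpt : ∀ x, pebW (cls x) (p₀ x) = if cls x = 5 then m else 0 := by
      intro x
      by_cases h5 : cls x = 5
      · simp [hp₀, h5, pebW]
      · by_cases h3 : cls x = 3
        · simp [hp₀, h5, h3, pebW]
        · simp [hp₀, h5, h3, pebW_zero]
    rw [Finset.sum_congr rfl (fun x _ => hpt x), ← Finset.sum_filter, h5set,
      Finset.sum_singleton]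
  -- extract solvability from Class 0
  have hmem : ∀ (ρ : V) (p : V → ℕ), (∑ x, p x) = n → PebblingSolvable G ρ p := by
    have hn1 : 1 ≤ n := by
      rw [hn]; exact Fintype.card_pos_iff.2 ⟨r⟩
    rw [Class0, pebblingNumber] at hG0
    have hne : {k : ℕ | ∀ (r : V) (p : V → ℕ),
        (∑ v, p v) = k → PebblingSolvable G r p}.Nonempty := by
      by_contra h
      rw [Set.not_nonempty_iff_eq_empty] at h
      rw [h, Nat.sInf_empty] at hG0
      omega
    have := Nat.sInf_mem hne
    rw [hG0] at this
    exact this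
  obtain ⟨q, hq, hqr⟩ := hmem r p₀ hsize
  have hmono := peb_move_le G (fun x k => pebW (cls x) k) hpair hq
  have hlow : 16 ≤ ∑ x, pebW (cls x) (q x) := by
    have hr0 : cls r = 0 := (hcls0 r).2 rfl
    have hval : pebW (cls r) (q r) = 16 * q r := by rw [hr0]; simp [pebW]
    calc (16 : ℕ) ≤ 16 * q r := by omega
      _ = pebW (cls r) (q r) := hval.symm
      _ ≤ ∑ x, pebW (cls x) (q x) :=
          Finset.single_le_sum (f := fun x => pebW (cls x) (q x))
            (fun i _ => Nat.zero_le _) (Finset.mem_univ r)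
  beta_reduce at hmono
  rw [hpot] at hmono
  omega
end
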